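/- arXiv:0812.0609 — 10 statements merged into one kernel-verified Lean document; each statement's English description precedes it below -/
import Mathlib

section
/- Let b, c ∈ k satisfy b³ = c³ = 1. In the free associative algebra k⟨x,y,z⟩, the following identity holds: (y·z + b·z·y + c·x²) + b·(z·x + b·x·z + c·y²) + c·(x·y + b·y·x + c·z²) = (x + b·y + b·c²·z)·(c·x + c·y + b²·z). -/
noncomputable section

/-- The free algebra `k⟨x,y,z⟩` on three generators. -/
abbrev FreeAlg (k : Type*) [CommSemiring k] := FreeAlgebra k (Fin 3)

/-- The generators `x = Xg k 0`, `y = Xg k 1`, `z = Xg k 2`. -/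
def Xg (k : Type*) [CommSemiring k] (i : Fin 3) : FreeAlg k := FreeAlgebra.ι k i

/-- The Sklyanin relations of `S(1,b,c)` are `sklyaninRel b c y z x`, `sklyaninRel b c z x y`
and `sklyaninRel b c x y z`. -/
def sklyaninRel {k A : Type*} [CommSemiring k] [Semiring A] [Algebra k A]
    (b c : k) (u v w : A) : A :=
  u * v + b • (v * u) + c • (w * w)

theorem sklyaninRel_add_smul_add_smul_eq_mul {k A : Type*} [CommSemiring k] [Semiring A]
    [Algebra k A] {b c : k} (hb : b ^ 3 = 1) (hc : c ^ 3 = 1) (x y z : A) :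
    sklyaninRel b c y z x + b • sklyaninRel b c z x y + c • sklyaninRel b c x y z
      = (x + b • y + (b * c ^ 2) • z) * (c • x + c • y + b ^ 2 • z) := by
  simp only [sklyaninRel, smul_add, mul_add, add_mul, smul_mul_assoc, mul_smul_comm, smul_smul]
  -- the coefficients of `y z`, `z y`, `z x`, `z z` agree only up to a factor `b ^ 3` or `c ^ 3`
  match_scalars <;> ring_nf <;> simp only [hb, hc, mul_one]

theorem sum_of_relations_factors_general
    (k : Type*) [Field k]
    (b c : k) (hb : b ^ 3 = 1) (hc : c ^ 3 = 1) :
    (Xg k 1 * Xg k 2 + b • (Xg k 2 * Xg k 1) + c • (Xg k 0 * Xg k 0))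
      + b • (Xg k 2 * Xg k 0 + b • (Xg k 0 * Xg k 2) + c • (Xg k 1 * Xg k 1))
      + c • (Xg k 0 * Xg k 1 + b • (Xg k 1 * Xg k 0) + c • (Xg k 2 * Xg k 2))
      = (Xg k 0 + b • Xg k 1 + (b * c ^ 2) • Xg k 2)
          * (c • Xg k 0 + c • Xg k 1 + (b ^ 2) • Xg k 2) :=
  sklyaninRel_add_smul_add_smul_eq_mul hb hc _ _ _

theorem sum_of_relations_factors
    (k : Type*) [Field k] [IsAlgClosed k] [CharZero k]
    (b c : k) (hb : b ^ 3 = 1) (hc : c ^ 3 = 1) :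
    (Xg k 1 * Xg k 2 + b • (Xg k 2 * Xg k 1) + c • (Xg k 0 * Xg k 0))
      + b • (Xg k 2 * Xg k 0 + b • (Xg k 0 * Xg k 2) + c • (Xg k 1 * Xg k 1))
      + c • (Xg k 0 * Xg k 1 + b • (Xg k 1 * Xg k 0) + c • (Xg k 2 * Xg k 2))
      = (Xg k 0 + b • Xg k 1 + (b * c ^ 2) • Xg k 2)
          * (c • Xg k 0 + c • Xg k 1 + (b ^ 2) • Xg k 2) :=
  sum_of_relations_factors_general k b c hb hc

end
end

section
/- Let [a:b:c] ∈ 𝔇. Then the degenerate Sklyanin algebra S(a,b,c) is not a domain: there exist nonzero elements u, v ∈ S(a,b,c) with u·v = 0 (indeed u and v can be taken to be the images of nonzero linear forms in x, y, z). -/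
/-!
STATEMENT 2: For `[a:b:c] ∈ 𝔇`, the degenerate Sklyanin algebra `S(a,b,c)` is not a
domain: there exist nonzero `u, v ∈ S(a,b,c)` with `u·v = 0`; indeed `u` and `v` can be
taken to be the images of (nonzero) linear forms in `x, y, z`.
-/

noncomputable section

/-- The defining relations of the Sklyanin algebra `S(a,b,c)`. -/
inductive SklRel (k : Type*) [CommSemiring k] (a b c : k) : FreeAlg k → FreeAlg k → Prop
  | f1 : SklRel k a b c
      (a • (Xg k 1 * Xg k 2) + b • (Xg k 2 * Xg k 1) + c • (Xg k 0 * Xg k 0)) 0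
  | f2 : SklRel k a b c
      (a • (Xg k 2 * Xg k 0) + b • (Xg k 0 * Xg k 2) + c • (Xg k 1 * Xg k 1)) 0
  | f3 : SklRel k a b c
      (a • (Xg k 0 * Xg k 1) + b • (Xg k 1 * Xg k 0) + c • (Xg k 2 * Xg k 2)) 0

/-- The three-dimensional Sklyanin algebra `S(a,b,c)`. -/
abbrev Sklyanin (k : Type*) [CommSemiring k] (a b c : k) := RingQuot (SklRel k a b c)

/-- The quotient map `k⟨x,y,z⟩ → S(a,b,c)`. -/
def sklQuot (k : Type*) [CommSemiring k] (a b c : k) :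
    FreeAlg k →ₐ[k] Sklyanin k a b c :=
  RingQuot.mkAlgHom k (SklRel k a b c)

/-- The span of the words of length `d` in `x, y, z`; `wordSpan k 1` is the space of
linear forms. -/
def wordSpan (k : Type*) [CommSemiring k] (d : ℕ) : Submodule k (FreeAlg k) :=
  Submodule.span k { w | ∃ f : Fin d → Fin 3, w = (List.ofFn fun i => Xg k (f i)).prod }

/-- `[a:b:c] ∈ 𝔇`. -/
def IsDegenerate {k : Type*} [CommSemiring k] (a b c : k) : Prop :=
  ((a ≠ 0 ∧ b = 0 ∧ c = 0) ∨ (a = 0 ∧ b ≠ 0 ∧ c = 0) ∨ (a = 0 ∧ b = 0 ∧ c ≠ 0)) ∨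
    (a ^ 3 = b ^ 3 ∧ b ^ 3 = c ^ 3 ∧ a * b * c ≠ 0)

/-!
Each relation of `S(a,b,c)` is a combination of products of two generators, so sending the
generators to the square-zero elements `inr eᵢ` of `k ⊕ k³` kills the relations; hence no
nonzero linear form vanishes in `S(a,b,c)`. On the other hand, for `[a:b:c] ∈ 𝔇` some product
of two nonzero linear forms lies in the span of the relations: a monomial `yz`, `zy` or `x²`
when only one coefficient is nonzero, and
`(acx + bcy + abz)(acx + acy + b²z) = a²c f₁ + abc f₂ + ac² f₃` when `a³ = b³ = c³`.
-/

namespace Sklyanin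

section CommSemiring

variable (k : Type*) [CommSemiring k] (a b c : k)

/-- `relator k a b c i` is `fᵢ₊₁`, written cyclically in the generators. -/
def relator (i : Fin 3) : FreeAlg k :=
  a • (Xg k (i + 1) * Xg k (i + 2)) + b • (Xg k (i + 2) * Xg k (i + 1)) +
    c • (Xg k i * Xg k i)

def toTrivSqZeroExt : Sklyanin k a b c →ₐ[k] TrivSqZeroExt k (Fin 3 → k) :=
  RingQuot.liftAlgHom k ⟨FreeAlgebra.lift k fun i => TrivSqZeroExt.inr (Pi.single i 1), by
    intro x y hxy
    induction hxy <;> simp [Xg]⟩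

variable {k a b c}

def linearForm (v : Fin 3 → k) : FreeAlg k := ∑ i, v i • Xg k i

lemma linearForm_mem_wordSpan (v : Fin 3 → k) : linearForm v ∈ wordSpan k 1 :=
  Submodule.sum_mem _ fun i _ => Submodule.smul_mem _ _ <|
    Submodule.subset_span ⟨fun _ => i, by simp [Xg]⟩

@[simp]
lemma linearForm_single (i : Fin 3) : linearForm (Pi.single i 1) = Xg k i := by
  simp [linearForm, Pi.single_apply]

lemma sklQuot_relator (i : Fin 3) : sklQuot k a b c (relator k a b c i) = 0 := by
  have hrel : SklRel k a b c (relator k a b c i) 0 := by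
    fin_cases i
    exacts [SklRel.f1, SklRel.f2, SklRel.f3]
  simpa [sklQuot] using RingQuot.mkAlgHom_rel k hrel

lemma sklQuot_eq_zero_of_mem_span_relator {x : FreeAlg k}
    (hx : x ∈ Submodule.span k (Set.range (relator k a b c))) : sklQuot k a b c x = 0 :=
  (Submodule.span_le (p := LinearMap.ker (sklQuot k a b c).toLinearMap)).2
    (Set.range_subset_iff.2 sklQuot_relator) hx

lemma toTrivSqZeroExt_sklQuot_linearForm (v : Fin 3 → k) :
    toTrivSqZeroExt k a b c (sklQuot k a b c (linearForm v)) = TrivSqZeroExt.inr v := by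
  simp [toTrivSqZeroExt, sklQuot, linearForm, Xg, ← TrivSqZeroExt.inr_smul,
    ← TrivSqZeroExt.inr_sum, ← pi_eq_sum_univ']

lemma sklQuot_linearForm_ne_zero {v : Fin 3 → k} (hv : v ≠ 0) :
    sklQuot k a b c (linearForm v) ≠ 0 := by
  intro h0
  have h := toTrivSqZeroExt_sklQuot_linearForm (a := a) (b := b) (c := c) v
  rw [h0, map_zero] at h
  exact hv (congrArg TrivSqZeroExt.snd h).symm

end CommSemiring

lemma linearForm_mul_linearForm_eq_relator_combination {k : Type*} [CommRing k] {a b c : k}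
    (hab : a ^ 3 = b ^ 3) (hbc : b ^ 3 = c ^ 3) :
    linearForm ![a * c, b * c, a * b] * linearForm ![a * c, a * c, b * b] =
      (a * a * c) • relator k a b c 0 + (a * b * c) • relator k a b c 1 +
        (a * c * c) • relator k a b c 2 := by
  simp only [linearForm, relator, Fin.sum_univ_three, Matrix.cons_val, mul_add, add_mul,
    smul_add, smul_smul, smul_mul_assoc, mul_smul_comm, Fin.reduceAdd, zero_add]
  match_scalars <;> first | ring1 | linear_combination (-c) * hab | linear_combination a * hbc

lemma exists_linearForm_mul_mem_span_relator {k : Type*} [Field k] {a b c : k}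
    (h : IsDegenerate a b c) :
    ∃ v w : Fin 3 → k, v ≠ 0 ∧ w ≠ 0 ∧
      linearForm v * linearForm w ∈ Submodule.span k (Set.range (relator k a b c)) := by
  have relator_mem (i : Fin 3) :
      relator k a b c i ∈ Submodule.span k (Set.range (relator k a b c)) :=
    Submodule.subset_span ⟨i, rfl⟩
  have single_ne_zero (i : Fin 3) : (Pi.single i 1 : Fin 3 → k) ≠ 0 := by simp
  obtain (⟨ha, rfl, rfl⟩ | ⟨rfl, hb, rfl⟩ | ⟨rfl, rfl, hc⟩) | ⟨hab, hbc, habc⟩ := h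
  · refine ⟨Pi.single 1 1, Pi.single 2 1, single_ne_zero 1, single_ne_zero 2,
      (Submodule.smul_mem_iff _ ha).1 ?_⟩
    simpa [relator] using relator_mem 0
  · refine ⟨Pi.single 2 1, Pi.single 1 1, single_ne_zero 2, single_ne_zero 1,
      (Submodule.smul_mem_iff _ hb).1 ?_⟩
    simpa [relator] using relator_mem 0
  · refine ⟨Pi.single 0 1, Pi.single 0 1, single_ne_zero 0, single_ne_zero 0,
      (Submodule.smul_mem_iff _ hc).1 ?_⟩
    simpa [relator] using relator_mem 0
  · have hac : a * c ≠ 0 := by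
      contrapose! habc
      linear_combination b * habc
    refine ⟨![a * c, b * c, a * b], ![a * c, a * c, b * b],
      fun h => hac (congrFun h 0), fun h => hac (congrFun h 0), ?_⟩
    rw [linearForm_mul_linearForm_eq_relator_combination hab hbc]
    exact Submodule.add_mem _ (Submodule.add_mem _ (Submodule.smul_mem _ _ (relator_mem 0))
      (Submodule.smul_mem _ _ (relator_mem 1))) (Submodule.smul_mem _ _ (relator_mem 2))

end Sklyanin

theorem degenerate_sklyanin_not_domain_general
    (k : Type*) [Field k]
    (a b c : k) (h : IsDegenerate a b c) :
    ∃ u v : FreeAlg k, u ∈ wordSpan k 1 ∧ v ∈ wordSpan k 1 ∧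
      sklQuot k a b c u ≠ 0 ∧ sklQuot k a b c v ≠ 0 ∧
      sklQuot k a b c u * sklQuot k a b c v = 0 := by
  obtain ⟨v, w, hv, hw, hvw⟩ := Sklyanin.exists_linearForm_mul_mem_span_relator h
  refine ⟨_, _, Sklyanin.linearForm_mem_wordSpan v, Sklyanin.linearForm_mem_wordSpan w,
    Sklyanin.sklQuot_linearForm_ne_zero hv, Sklyanin.sklQuot_linearForm_ne_zero hw, ?_⟩
  rw [← map_mul]
  exact Sklyanin.sklQuot_eq_zero_of_mem_span_relator hvw

theorem degenerate_sklyanin_not_domain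
    (k : Type*) [Field k] [IsAlgClosed k] [CharZero k]
    (a b c : k) (h : IsDegenerate a b c) :
    ∃ u v : FreeAlg k, u ∈ wordSpan k 1 ∧ v ∈ wordSpan k 1 ∧
      sklQuot k a b c u ≠ 0 ∧ sklQuot k a b c v ≠ 0 ∧
      sklQuot k a b c u * sklQuot k a b c v = 0 :=
  degenerate_sklyanin_not_domain_general k a b c h

end
end

section
/- Let [a:b:c] ∈ 𝔇. Then the degenerate Sklyanin algebra S(a,b,c) is not left Noetherian and not right Noetherian: S(a,b,c) is not Noetherian as a left module over itself, and not Noetherian as a right module over itself. -/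
/-!
Fix `δ : ZMod 3` and call a path `E : ℕ → ZMod 3` admissible if it never takes the step
`E (j + 1) = E j + δ`. For every admissible path, `S(a,b,c)` acts on `k^(ℕ)` by weighted shifts in
which suitable elements `u_m`, `m : ZMod 3`, send `e_j` to a fixed nonzero multiple of `e_(j+1)`
when `E j = m` and to `0` otherwise. In the three monomial cases the `u_m` are the generators
themselves; when `a³ = b³ = c³ ≠ 0` they are a discrete Fourier transform of `x, y, z` over the
characters of `ZMod 3`. A word in the `u_m` therefore does not kill `e_0` exactly when it spells
an initial segment of `E`.

Let `E_n` walk with step `δ + 1` up to time `n` and with step `δ + 2` afterwards, and let `w_n`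
spell its first `n + 2` letters. In the module of `E_n`, `w_n` does not kill `e_0` while every `w_i`
with `i < n` does, so the left ideals generated by `w_0, …, w_(n-1)` strictly increase. Right
ideals are handled by `S(a,b,c)ᵐᵒᵖ ↠ S(b,a,c)`, since `𝔇` is symmetric in `a` and `b`.
-/

noncomputable section

open Finsupp

section PathModule

variable {k : Type*} [CommSemiring k]

def weightedShift : (ℕ → k) →ₗ[k] Module.End k (ℕ →₀ k) :=
  (Finsupp.lsum k).toLinearMap ∘ₗ
    LinearMap.pi fun j => (LinearMap.proj j : (ℕ → k) →ₗ[k] k).smulRight (lsingle (j + 1))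

@[simp]
lemma weightedShift_single (w : ℕ → k) (j : ℕ) (t : k) :
    weightedShift w (single j t) = single (j + 1) (w j * t) := by
  simp [weightedShift, smul_single, mul_comm]

def pathWord {A ι : Type*} [Semiring A] (G : ι → A) (f : ℕ → ι) : ℕ → A
  | 0 => 1
  | L + 1 => G (f L) * pathWord G f L

lemma pathWord_apply_single_zero {A ι : Type*} [Semiring A] [Algebra k A] {G : ι → A}
    {W : ℕ → ι → k} (ρ : A →ₐ[k] Module.End k (ℕ →₀ k))
    (hρ : ∀ i, ρ (G i) = weightedShift fun j => W j i) (f : ℕ → ι) (L : ℕ) :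
    ρ (pathWord G f L) (single 0 1) = single L (∏ j ∈ Finset.range L, W j (f j)) := by
  induction L with
  | zero => simp [pathWord]
  | succ L ih =>
    rw [pathWord, map_mul, Module.End.mul_apply, ih, hρ, weightedShift_single,
      Finset.prod_range_succ, mul_comm]

end PathModule

theorem not_isNoetherian_of_notMem_span {R M : Type*} [Semiring R] [AddCommMonoid M]
    [Module R M] (w : ℕ → M) (hw : ∀ n, w n ∉ Submodule.span R (w '' Set.Iio n)) :
    ¬ IsNoetherian R M := by
  rw [isNoetherian_iff']
  intro _
  refine not_strictMono_of_wellFoundedGT (fun n => Submodule.span R (w '' Set.Iio n))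
    (strictMono_nat_of_lt_succ fun n => SetLike.lt_iff_le_and_exists.mpr ⟨?_, w n, ?_, hw n⟩)
  · exact Submodule.span_mono (Set.image_mono (Set.Iio_subset_Iio n.le_succ))
  · exact Submodule.subset_span ⟨n, n.lt_succ_self, rfl⟩

theorem notMem_span_of_apply_eq_zero {R S V : Type*} [Semiring R] [Semiring S]
    [AddCommMonoid V] [Module S V] (ρ : R →+* Module.End S V) (v : V) {s : Set R} {x : R}
    (hs : ∀ r ∈ s, ρ r v = 0) (hx : ρ x v ≠ 0) : x ∉ Submodule.span R s := fun hmem =>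
  hx <| Submodule.span_induction hs (by simp) (fun _ _ _ _ hx hy => by simp [hx, hy])
    (fun r _ _ hx => by simp [hx]) hmem

/-- The truncated subtraction `t - n` vanishes up to time `n`, so the steps are `δ + 1` before
time `n` and `δ + 2` from then on. -/
def bentPath (δ : ZMod 3) (n t : ℕ) : ZMod 3 := (δ + 1) * t + (t - n : ℕ)

lemma bentPath_succ_ne (δ : ZMod 3) (n j : ℕ) :
    bentPath δ n (j + 1) ≠ bentPath δ n j + δ := by
  unfold bentPath
  rcases (by omega : j + 1 - n = j - n + 1 ∨ j + 1 - n = j - n) with h | h <;>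
  · rw [h]
    push_cast
    intro h'
    first
    | exact absurd (by linear_combination h' : (2 : ZMod 3) = 0) (by decide)
    | exact absurd (by linear_combination h' : (1 : ZMod 3) = 0) (by decide)

lemma bentPath_ne_of_lt (δ : ZMod 3) {i n : ℕ} (h : i < n) :
    bentPath δ i (i + 1) ≠ bentPath δ n (i + 1) := by
  simp [bentPath, Nat.sub_eq_zero_of_le (h : i + 1 ≤ n)]

theorem not_isNoetherian_of_forall_path_rep {k A : Type*} [CommRing k] [NoZeroDivisors k]
    [Ring A] [Algebra k A] (G : ZMod 3 → A) (δ : ZMod 3) {C : k} (hC : C ≠ 0)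
    (hrep : ∀ E : ℕ → ZMod 3, (∀ j, E (j + 1) ≠ E j + δ) →
      ∃ ρ : A →ₐ[k] Module.End k (ℕ →₀ k),
        ∀ m, ρ (G m) = weightedShift fun j => if E j = m then C else 0) :
    ¬ IsNoetherian A A := by
  refine not_isNoetherian_of_notMem_span (fun n => pathWord G (bentPath δ n) (n + 2)) fun n => ?_
  obtain ⟨ρ, hρ⟩ := hrep (bentPath δ n) (bentPath_succ_ne δ n)
  refine notMem_span_of_apply_eq_zero ρ.toRingHom (single 0 1) ?_ ?_
  · rintro _ ⟨i, hi, rfl⟩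
    rw [AlgHom.toRingHom_eq_coe, RingHom.coe_coe, pathWord_apply_single_zero ρ hρ,
      Finset.prod_eq_zero (Finset.mem_range.2 (i + 1).lt_succ_self)
        (if_neg (bentPath_ne_of_lt δ hi).symm), single_zero]
  · simp [pathWord_apply_single_zero ρ hρ, hC]

lemma zmod_three_cases (m : ZMod 3) : m = 0 ∨ m = 1 ∨ m = 2 := by decide +revert

lemma AddChar.pow_three_zmod_three {k : Type*} [CommMonoid k] (ψ : AddChar (ZMod 3) k)
    (x : ZMod 3) : ψ x ^ 3 = 1 := by
  rw [← AddChar.map_nsmul_eq_pow, nsmul_eq_mul, Nat.cast_ofNat,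
    show (3 : ZMod 3) = 0 from rfl, zero_mul, AddChar.map_zero_eq_one]

lemma AddChar.one_add_add_sq_zmod_three {k : Type*} [Field k] {ψ : AddChar (ZMod 3) k}
    (hψ : ψ.IsPrimitive) (t : ZMod 3) : 1 + ψ t + ψ t ^ 2 = if t = 0 then 3 else 0 := by
  have h := AddChar.sum_mulShift t hψ
  rw [show ∀ f : ZMod 3 → k, ∑ x, f x = f 0 + f 1 + f 2 from Fin.sum_univ_three] at h
  simp only [zero_mul, AddChar.map_zero_eq_one, one_mul, ZMod.card] at h
  rw [← AddChar.map_nsmul_eq_pow, nsmul_eq_mul, Nat.cast_ofNat, h]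
  split_ifs <;> simp

section SklyaninPair

variable {k : Type*} [CommRing k]

/-- `u` and `v` are the weights of `x, y, z` at steps `j + 1` and `j` of a path: the defining
relations of `S(a,b,c)`, evaluated on the corresponding weighted shifts at `e_j`. -/
def IsSklyaninPair (a b c : k) (u v : Fin 3 → k) : Prop :=
  a * (u 1 * v 2) + b * (u 2 * v 1) + c * (u 0 * v 0) = 0 ∧
    a * (u 2 * v 0) + b * (u 0 * v 2) + c * (u 1 * v 1) = 0 ∧
    a * (u 0 * v 1) + b * (u 1 * v 0) + c * (u 2 * v 2) = 0

lemma quadratic_weightedShift_eq_zero {a b c : k} {u v w : ℕ → k}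
    (h : ∀ j, a * (u (j + 1) * v j) + b * (v (j + 1) * u j) + c * (w (j + 1) * w j) = 0) :
    a • (weightedShift u * weightedShift v) + b • (weightedShift v * weightedShift u) +
      c • (weightedShift w * weightedShift w) = 0 := by
  refine lhom_ext fun j t => ?_
  simp only [LinearMap.add_apply, LinearMap.smul_apply, Module.End.mul_apply,
    weightedShift_single, smul_single, smul_eq_mul, LinearMap.zero_apply, ← single_add,
    single_eq_zero]
  linear_combination t * h j

lemma isSklyaninPair_indicator {a b c : k} {m m' : ZMod 3} (ha : m' = m + 2 → a = 0)
    (hb : m' = m + 1 → b = 0) (hc : m' = m → c = 0) :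
    IsSklyaninPair a b c (fun i => if ((i : ℕ) : ZMod 3) = m' then 1 else 0)
      (fun i => if ((i : ℕ) : ZMod 3) = m then 1 else 0) := by
  obtain rfl | rfl | rfl := zmod_three_cases m <;>
    obtain rfl | rfl | rfl := zmod_three_cases m' <;>
    simp_all +decide [IsSklyaninPair]

end SklyaninPair

namespace Sklyanin

section CommRing

variable {k : Type*} [CommRing k]

theorem exists_weightedShift_rep (a b c : k) (W : ℕ → Fin 3 → k)
    (hW : ∀ j, IsSklyaninPair a b c (W (j + 1)) (W j)) :
    ∃ ρ : Sklyanin k a b c →ₐ[k] Module.End k (ℕ →₀ k),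
      ∀ i, ρ (RingQuot.mkAlgHom k _ (Xg k i)) = weightedShift fun j => W j i := by
  refine ⟨RingQuot.liftAlgHom k ⟨FreeAlgebra.lift k fun i => weightedShift fun j => W j i, ?_⟩,
    fun i => by rw [RingQuot.liftAlgHom_mkAlgHom_apply, Xg, FreeAlgebra.lift_ι_apply]⟩
  rintro _ _ ⟨⟩ <;> simp only [Xg, map_add, map_smul, map_mul, map_zero, FreeAlgebra.lift_ι_apply]
  exacts [quadratic_weightedShift_eq_zero fun j => (hW j).1,
    quadratic_weightedShift_eq_zero fun j => (hW j).2.1,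
    quadratic_weightedShift_eq_zero fun j => (hW j).2.2]

theorem not_isNoetherian_of_pathWeights [NoZeroDivisors k] {a b c : k} (δ : ZMod 3)
    (M g : ZMod 3 → Fin 3 → k) {C : k} (hC : C ≠ 0)
    (hM : ∀ m m', m' ≠ m + δ → IsSklyaninPair a b c (M m') (M m))
    (hg : ∀ m m', ∑ i, g m i * M m' i = if m' = m then C else 0) :
    ¬ IsNoetherian (Sklyanin k a b c) (Sklyanin k a b c) := by
  refine not_isNoetherian_of_forall_path_rep
    (fun m => RingQuot.mkAlgHom k _ (∑ i, g m i • Xg k i)) δ hC fun E hE => ?_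
  obtain ⟨ρ, hρ⟩ := exists_weightedShift_rep a b c (fun j => M (E j)) fun j => hM _ _ (hE j)
  refine ⟨ρ, fun m => ?_⟩
  have hweight : (fun j => if E j = m then C else 0) = ∑ i, g m i • fun j => M (E j) i := by
    ext j
    simp [← hg]
  simp [hweight, hρ]

theorem not_isNoetherian_of_monomial [IsDomain k] {a b c : k} (δ : ZMod 3)
    (ha : a = 0 ∨ δ = 2) (hb : b = 0 ∨ δ = 1) (hc : c = 0 ∨ δ = 0) :
    ¬ IsNoetherian (Sklyanin k a b c) (Sklyanin k a b c) := by
  refine not_isNoetherian_of_pathWeights δ (fun m i => if ((i : ℕ) : ZMod 3) = m then 1 else 0)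
    (fun m i => if ((i : ℕ) : ZMod 3) = m then 1 else 0) one_ne_zero
    (fun m m' hne => isSklyaninPair_indicator ?_ ?_ ?_) fun m m' => ?_
  · rcases ha with ha | rfl
    exacts [fun _ => ha, fun h => absurd h hne]
  · rcases hb with hb | rfl
    exacts [fun _ => hb, fun h => absurd h hne]
  · rcases hc with hc | rfl
    exacts [fun _ => hc, fun h => absurd (h.trans (add_zero m).symm) hne]
  · obtain rfl | rfl | rfl := zmod_three_cases m <;>
      obtain rfl | rfl | rfl := zmod_three_cases m' <;>
      simp +decide [Fin.sum_univ_three]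

end CommRing

theorem not_isNoetherian_of_pow_three_eq {k : Type*} [Field k] {a b c ζ : k}
    (hζ : IsPrimitiveRoot ζ 3) (h3 : (3 : k) ≠ 0) (hab : a ^ 3 = b ^ 3) (hbc : b ^ 3 = c ^ 3)
    (habc : a * b * c ≠ 0) : ¬ IsNoetherian (Sklyanin k a b c) (Sklyanin k a b c) := by
  set ψ := AddChar.zmodChar 3 hζ.pow_eq_one
  have hψ : ψ.IsPrimitive := AddChar.zmodChar_primitive_of_primitive_root 3 hζ
  have ha : a ≠ 0 := by rintro rfl; simp at habc
  have hc : c ≠ 0 := by rintro rfl; simp at habc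
  obtain ⟨d, rfl⟩ : ∃ d : ZMod 3, b = ψ d * a := by
    obtain ⟨i, -, hi⟩ := hζ.eq_pow_of_pow_eq_one (ξ := b / a)
      (by rw [div_pow, ← hab, div_self (pow_ne_zero 3 ha)])
    exact ⟨i, by rw [AddChar.zmodChar_apply', hi, div_mul_cancel₀ _ ha]⟩
  have hd := ψ.pow_three_zmod_three d
  -- `g` is `3 a³ c` times the inverse of the Vandermonde-type matrix `M`, by the character sum
  -- `1 + ψ t + ψ t ^ 2 = 3 [t = 0]`; the same sum makes the relations vanish off the step `2 d`.
  refine not_isNoetherian_of_pathWeights (2 * d) (fun m => ![a, ψ d * a * ψ m, c * ψ m ^ 2])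
    (fun m => ![a ^ 2 * c, (ψ d * a) ^ 2 * c * ψ m ^ 2, a ^ 3 * ψ m]) (C := 3 * a ^ 3 * c)
    (by simp [h3, ha, hc]) (fun m m' hne => ?_) fun m m' => ?_
  all_goals have hm := ψ.pow_three_zmod_three m; have hm' := ψ.pow_three_zmod_three m'
  · have hs : d + m' + 2 * m ≠ 0 :=
      (by decide : ∀ d m m' : ZMod 3, m' ≠ m + 2 * d → d + m' + 2 * m ≠ 0) d m m' hne
    have hσ := AddChar.one_add_add_sq_zmod_three hψ (d + m' + 2 * m)
    rw [if_neg hs, AddChar.map_add_eq_mul, AddChar.map_add_eq_mul, two_mul,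
      AddChar.map_add_eq_mul] at hσ
    refine ⟨?_, ?_, ?_⟩ <;>
      simp only [Fin.isValue, Matrix.cons_val_zero, Matrix.cons_val_one, Matrix.cons_val] <;>
      grind
  · have hτ := AddChar.one_add_add_sq_zmod_three hψ (m' + 2 * m)
    simp only [(by decide : ∀ m m' : ZMod 3, m' + 2 * m = 0 ↔ m' = m) m m'] at hτ
    rw [AddChar.map_add_eq_mul, two_mul, AddChar.map_add_eq_mul] at hτ
    simp only [Fin.sum_univ_three, Fin.isValue, Matrix.cons_val_zero, Matrix.cons_val_one,
      Matrix.cons_val]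
    split_ifs at hτ ⊢ <;> grind

section CommSemiring

variable {k : Type*} [CommSemiring k]

def oppositeToSwap (a b c : k) : (Sklyanin k a b c)ᵐᵒᵖ →ₐ[k] Sklyanin k b a c :=
  AlgHom.opComm <| RingQuot.liftAlgHom k
    ⟨FreeAlgebra.lift k fun i => MulOpposite.op (RingQuot.mkAlgHom k _ (Xg k i)), by
      rintro _ _ ⟨⟩ <;>
        simp only [Xg, map_add, map_smul, map_mul, map_zero, FreeAlgebra.lift_ι_apply,
          ← MulOpposite.op_mul, ← MulOpposite.op_smul, ← MulOpposite.op_add,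
          MulOpposite.op_eq_zero_iff, add_comm (a • _)] <;>
        [have h := RingQuot.mkAlgHom_rel k (SklRel.f1 (a := b) (b := a) (c := c));
         have h := RingQuot.mkAlgHom_rel k (SklRel.f2 (a := b) (b := a) (c := c));
         have h := RingQuot.mkAlgHom_rel k (SklRel.f3 (a := b) (b := a) (c := c))] <;>
        simpa only [Xg, map_add, map_smul, map_mul, map_zero] using h⟩

theorem oppositeToSwap_surjective (a b c : k) : Function.Surjective (oppositeToSwap a b c) := by
  intro s
  obtain ⟨p, rfl⟩ := RingQuot.mkAlgHom_surjective k _ s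
  induction p using FreeAlgebra.induction with
  | grade0 r => exact ⟨algebraMap k _ r, by rw [AlgHom.commutes, AlgHom.commutes]⟩
  | grade1 i =>
    exact ⟨MulOpposite.op (RingQuot.mkAlgHom k _ (Xg k i)), by simp [oppositeToSwap, Xg]⟩
  | mul x y hx hy =>
    obtain ⟨u, hu⟩ := hx
    obtain ⟨v, hv⟩ := hy
    exact ⟨u * v, by rw [map_mul, hu, hv, map_mul]⟩
  | add x y hx hy =>
    obtain ⟨u, hu⟩ := hx
    obtain ⟨v, hv⟩ := hy
    exact ⟨u + v, by rw [map_add, hu, hv, map_add]⟩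

end CommSemiring

theorem not_isNoetherian_of_isDegenerate {k : Type*} [Field k] [IsSepClosed k] [CharZero k]
    {a b c : k} (h : IsDegenerate a b c) :
    ¬ IsNoetherian (Sklyanin k a b c) (Sklyanin k a b c) := by
  rcases h with (⟨-, rfl, rfl⟩ | ⟨rfl, -, rfl⟩ | ⟨rfl, rfl, -⟩) | ⟨hab, hbc, habc⟩
  · exact not_isNoetherian_of_monomial 2 (.inr rfl) (.inl rfl) (.inl rfl)
  · exact not_isNoetherian_of_monomial 1 (.inl rfl) (.inr rfl) (.inl rfl)
  · exact not_isNoetherian_of_monomial 0 (.inl rfl) (.inl rfl) (.inr rfl)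
  · obtain ⟨ζ, hζ⟩ := HasEnoughRootsOfUnity.exists_primitiveRoot k 3
    exact not_isNoetherian_of_pow_three_eq hζ three_ne_zero hab hbc habc

end Sklyanin

theorem IsDegenerate.swap {k : Type*} [CommSemiring k] {a b c : k} (h : IsDegenerate a b c) :
    IsDegenerate b a c := by
  rcases h with (⟨ha, hb, hc⟩ | ⟨ha, hb, hc⟩ | ⟨ha, hb, hc⟩) | ⟨hab, hbc, habc⟩
  · exact .inl (.inr (.inl ⟨hb, ha, hc⟩))
  · exact .inl (.inl ⟨hb, ha, hc⟩)
  · exact .inl (.inr (.inr ⟨hb, ha, hc⟩))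
  · exact .inr ⟨hab.symm, hab.trans hbc, by rwa [mul_comm b]⟩

theorem degenerate_sklyanin_not_noetherian
    (k : Type*) [Field k] [IsAlgClosed k] [CharZero k]
    (a b c : k) (h : IsDegenerate a b c) :
    ¬ IsNoetherian (Sklyanin k a b c) (Sklyanin k a b c) ∧
      ¬ IsNoetherian (Sklyanin k a b c)ᵐᵒᵖ (Sklyanin k a b c)ᵐᵒᵖ :=
  ⟨Sklyanin.not_isNoetherian_of_isDegenerate h, fun _ =>
    Sklyanin.not_isNoetherian_of_isDegenerate h.swap <| isNoetherianRing_of_surjective _ _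
      (Sklyanin.oppositeToSwap a b c).toRingHom (Sklyanin.oppositeToSwap_surjective a b c)⟩
end
end

section
/- Let b, c ∈ k satisfy b³ = c³ = 1. Then the Koszul dual of S(1,b,c), namely the quotient of k⟨x,y,z⟩ by the two-sided ideal generated by z² − c·x·y, y·z − c²·x², z·y − b²·y·z, y² − b·c·x·z, z·x − b·x·z, and y·x − b²·x·y, is infinite-dimensional as a k-vector space (it has a basis given by the images of the monomials x^i, x^j·y, x^k·z for i, j, k ∈ ℕ). -/
/-!
STATEMENT 5: For `b, c ∈ k` with `b³ = c³ = 1`, the Koszul dual of `S(1,b,c)` — the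
quotient of `k⟨x,y,z⟩` by the two-sided ideal generated by `z² − c·x·y`, `y·z − c²·x²`,
`z·y − b²·y·z`, `y² − b·c·x·z`, `z·x − b·x·z`, `y·x − b²·x·y` — is infinite-dimensional
over `k`, with basis the images of the monomials `x^i`, `x^j·y`, `x^k·z` (`i,j,k ∈ ℕ`).
-/

noncomputable section

/-- The defining relations of the Koszul dual `S(1,b,c)!`. -/
inductive KDRel (k : Type*) [CommRing k] (b c : k) : FreeAlg k → FreeAlg k → Prop
  | r1 : KDRel k b c (Xg k 2 * Xg k 2 - c • (Xg k 0 * Xg k 1)) 0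
  | r2 : KDRel k b c (Xg k 1 * Xg k 2 - (c ^ 2) • (Xg k 0 * Xg k 0)) 0
  | r3 : KDRel k b c (Xg k 2 * Xg k 1 - (b ^ 2) • (Xg k 1 * Xg k 2)) 0
  | r4 : KDRel k b c (Xg k 1 * Xg k 1 - (b * c) • (Xg k 0 * Xg k 2)) 0
  | r5 : KDRel k b c (Xg k 2 * Xg k 0 - b • (Xg k 0 * Xg k 2)) 0
  | r6 : KDRel k b c (Xg k 1 * Xg k 0 - (b ^ 2) • (Xg k 0 * Xg k 1)) 0

/-- The Koszul dual `S(1,b,c)!` of the degenerate Sklyanin algebra `S(1,b,c)`. -/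
abbrev KoszulDual (k : Type*) [CommRing k] (b c : k) := RingQuot (KDRel k b c)

/-- The quotient map `k⟨x,y,z⟩ → S(1,b,c)!`. -/
def kdQuot (k : Type*) [CommRing k] (b c : k) : FreeAlg k →ₐ[k] KoszulDual k b c :=
  RingQuot.mkAlgHom k (KDRel k b c)


/-!
Modulo the relations, right multiplication by `x`, `y` or `z` sends each of `x^i`, `x^j y`,
`x^l z` to a scalar multiple of another one (e.g. `x^l z y = b² c² x^(l+2)`), so, as `1 = x^0`,
these monomials span. Conversely, the same right-multiplication table satisfies the six relations
as soon as `b ^ 3 = 1`; this is a right action of the algebra on the free module with basis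
`ℕ ⊕ ℕ ⊕ ℕ` under which each monomial carries the basis vector of `x^0` to its own basis vector,
so the monomials are independent.
-/

open Finsupp

theorem Submodule.span_eq_top_of_mul_mem {R A : Type*} [CommSemiring R] [Semiring A]
    [Algebra R A] {s t : Set A} (hs : Algebra.adjoin R s = ⊤) (h1 : 1 ∈ span R t)
    (ht : ∀ m ∈ t, ∀ g ∈ s, m * g ∈ span R t) : span R t = ⊤ := by
  have hgen : ∀ g ∈ s, span R t ≤ (span R t).comap (LinearMap.mulRight R g) :=
    fun g hg => span_le.2 fun m hm => ht m hm g hg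
  have hmul : ∀ a : A, ∀ m ∈ span R t, m * a ∈ span R t := by
    intro a
    have ha : a ∈ Algebra.adjoin R s := hs ▸ Algebra.mem_top
    induction ha using Algebra.adjoin_induction with
    | mem g hg => exact fun m hm => hgen g hg hm
    | algebraMap r =>
      intro m hm
      rw [← Algebra.commutes, ← Algebra.smul_def]
      exact smul_mem _ r hm
    | add a a' _ _ ha ha' => exact fun m hm => mul_add m a a' ▸ add_mem (ha m hm) (ha' m hm)
    | mul a a' _ _ ha ha' => exact fun m hm => mul_assoc m a a' ▸ ha' _ (ha m hm)
  exact eq_top_iff.2 fun a _ => one_mul a ▸ hmul a 1 h1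

namespace KoszulDual

variable {k : Type*} [CommRing k] (b c : k)

abbrev x : KoszulDual k b c := kdQuot k b c (Xg k 0)
abbrev y : KoszulDual k b c := kdQuot k b c (Xg k 1)
abbrev z : KoszulDual k b c := kdQuot k b c (Xg k 2)

theorem kdQuot_eq_of_rel {p q : FreeAlg k} (h : KDRel k b c (p - q) 0) :
    kdQuot k b c p = kdQuot k b c q := by
  rw [← sub_eq_zero, ← map_sub, ← map_zero (kdQuot k b c)]
  exact RingQuot.mkAlgHom_rel k h

theorem z_mul_z : z b c * z b c = c • (x b c * y b c) := by
  simpa only [map_mul, map_smul] using kdQuot_eq_of_rel b c .r1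
theorem y_mul_z : y b c * z b c = c ^ 2 • (x b c * x b c) := by
  simpa only [map_mul, map_smul] using kdQuot_eq_of_rel b c .r2
theorem z_mul_y : z b c * y b c = b ^ 2 • (y b c * z b c) := by
  simpa only [map_mul, map_smul] using kdQuot_eq_of_rel b c .r3
theorem y_mul_y : y b c * y b c = (b * c) • (x b c * z b c) := by
  simpa only [map_mul, map_smul] using kdQuot_eq_of_rel b c .r4
theorem z_mul_x : z b c * x b c = b • (x b c * z b c) := by
  simpa only [map_mul, map_smul] using kdQuot_eq_of_rel b c .r5
theorem y_mul_x : y b c * x b c = b ^ 2 • (x b c * y b c) := by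
  simpa only [map_mul, map_smul] using kdQuot_eq_of_rel b c .r6

theorem adjoin_xyz_eq_top : Algebra.adjoin k {x b c, y b c, z b c} = ⊤ := by
  have : {x b c, y b c, z b c} = kdQuot k b c '' Set.range (FreeAlgebra.ι k) := by
    rw [← Set.range_comp]
    ext a
    simp [Fin.exists_fin_succ, eq_comm, x, y, z, Xg]
  rw [this, Algebra.adjoin_image, FreeAlgebra.adjoin_range_ι, Algebra.map_top,
    AlgHom.range_eq_top]
  exact RingQuot.mkAlgHom_surjective k _

def normalMonomial : ℕ ⊕ ℕ ⊕ ℕ → KoszulDual k b c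
  | .inl i => x b c ^ i
  | .inr (.inl j) => x b c ^ j * y b c
  | .inr (.inr l) => x b c ^ l * z b c

theorem normalMonomial_mul_mem_span (m : ℕ ⊕ ℕ ⊕ ℕ) {g : KoszulDual k b c}
    (hg : g ∈ ({x b c, y b c, z b c} : Set _)) :
    normalMonomial b c m * g ∈ Submodule.span k (Set.range (normalMonomial b c)) := by
  have mem (m) : normalMonomial b c m ∈ Submodule.span k (Set.range (normalMonomial b c)) :=
    Submodule.subset_span ⟨m, rfl⟩
  have smul_mem (r : k) (m) := Submodule.smul_mem _ r (mem m)
  rcases m with i | j | l <;> obtain rfl | rfl | rfl := hg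
  · simpa only [normalMonomial, pow_succ] using mem (.inl (i + 1))
  · exact mem (.inr (.inl i))
  · exact mem (.inr (.inr i))
  · convert smul_mem (b ^ 2) (.inr (.inl (j + 1))) using 1
    rw [normalMonomial, normalMonomial, mul_assoc, y_mul_x, mul_smul_comm, ← mul_assoc,
      ← pow_succ]
  · convert smul_mem (b * c) (.inr (.inr (j + 1))) using 1
    rw [normalMonomial, normalMonomial, mul_assoc, y_mul_y, mul_smul_comm, ← mul_assoc,
      ← pow_succ]
  · convert smul_mem (c ^ 2) (.inl (j + 2)) using 1
    rw [normalMonomial, normalMonomial, mul_assoc, y_mul_z, mul_smul_comm, ← pow_two, ← pow_add]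
  · convert smul_mem b (.inr (.inr (l + 1))) using 1
    rw [normalMonomial, normalMonomial, mul_assoc, z_mul_x, mul_smul_comm, ← mul_assoc,
      ← pow_succ]
  · convert smul_mem (b ^ 2 * c ^ 2) (.inl (l + 2)) using 1
    rw [normalMonomial, normalMonomial, mul_assoc, z_mul_y, y_mul_z, smul_smul, mul_smul_comm,
      ← pow_two, ← pow_add]
  · convert smul_mem c (.inr (.inl (l + 1))) using 1
    rw [normalMonomial, normalMonomial, mul_assoc, z_mul_z, mul_smul_comm, ← mul_assoc,
      ← pow_succ]

theorem span_normalMonomial_eq_top : Submodule.span k (Set.range (normalMonomial b c)) = ⊤ :=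
  Submodule.span_eq_top_of_mul_mem (adjoin_xyz_eq_top b c)
    (Submodule.subset_span ⟨.inl 0, pow_zero _⟩)
    (by rintro _ ⟨m, rfl⟩ g hg; exact normalMonomial_mul_mem_span b c m hg)

/-- Row `g`, column `m`: the coordinates of `normalMonomial m * (x, y, z)_g`, read off from the
defining relations. -/
def rightMulTable : Fin 3 → ℕ ⊕ ℕ ⊕ ℕ → (ℕ ⊕ ℕ ⊕ ℕ) →₀ k
  | 0, .inl i => single (.inl (i + 1)) 1
  | 0, .inr (.inl j) => single (.inr (.inl (j + 1))) (b ^ 2)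
  | 0, .inr (.inr l) => single (.inr (.inr (l + 1))) b
  | 1, .inl i => single (.inr (.inl i)) 1
  | 1, .inr (.inl j) => single (.inr (.inr (j + 1))) (b * c)
  | 1, .inr (.inr l) => single (.inl (l + 2)) (b ^ 2 * c ^ 2)
  | 2, .inl i => single (.inr (.inr i)) 1
  | 2, .inr (.inl j) => single (.inl (j + 2)) (c ^ 2)
  | 2, .inr (.inr l) => single (.inr (.inl (l + 1))) c

def freeRightAction : FreeAlg k →ₐ[k] (Module.End k ((ℕ ⊕ ℕ ⊕ ℕ) →₀ k))ᵐᵒᵖ :=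
  FreeAlgebra.lift k fun g => .op (linearCombination k (rightMulTable b c g))

theorem unop_freeRightAction_Xg (g : Fin 3) :
    (freeRightAction b c (Xg k g)).unop = linearCombination k (rightMulTable b c g) := by
  rw [freeRightAction, Xg, FreeAlgebra.lift_ι_apply, MulOpposite.unop_op]

theorem freeRightAction_rel (hb : b ^ 3 = 1) {p q : FreeAlg k} (h : KDRel k b c p q) :
    freeRightAction b c p = freeRightAction b c q := by
  cases h <;> rw [map_sub, map_zero, sub_eq_zero] <;> apply MulOpposite.unop_injective <;>
    refine Finsupp.basisSingleOne.ext fun m => ?_ <;> rcases m with i | j | l <;>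
    simp only [coe_basisSingleOne, map_mul, map_smul, MulOpposite.unop_mul, MulOpposite.unop_smul,
      unop_freeRightAction_Xg, Module.End.mul_apply, LinearMap.smul_apply, linearCombination_single,
      rightMulTable, smul_single, smul_eq_mul, add_assoc, Nat.reduceAdd] <;> congr 1 <;> grind

def rightAction (hb : b ^ 3 = 1) :
    KoszulDual k b c →ₐ[k] (Module.End k ((ℕ ⊕ ℕ ⊕ ℕ) →₀ k))ᵐᵒᵖ :=
  RingQuot.liftAlgHom k ⟨freeRightAction b c, fun _ _ => freeRightAction_rel b c hb⟩

theorem unop_rightAction_kdQuot_Xg (hb : b ^ 3 = 1) (g : Fin 3) :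
    (rightAction b c hb (kdQuot k b c (Xg k g))).unop =
      linearCombination k (rightMulTable b c g) := by
  rw [← unop_freeRightAction_Xg]
  exact congrArg MulOpposite.unop (RingQuot.liftAlgHom_mkAlgHom_apply _ _ _ _)

theorem single_one_rightAction_x_pow (hb : b ^ 3 = 1) (i : ℕ) :
    (rightAction b c hb (x b c ^ i)).unop (single (.inl 0) 1) = single (.inl i) 1 := by
  induction i with
  | zero => simp
  | succ i ih =>
    rw [pow_succ, map_mul, MulOpposite.unop_mul, Module.End.mul_apply, ih,
      unop_rightAction_kdQuot_Xg, linearCombination_single, one_smul, rightMulTable]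

theorem single_one_rightAction_normalMonomial (hb : b ^ 3 = 1) (m : ℕ ⊕ ℕ ⊕ ℕ) :
    (rightAction b c hb (normalMonomial b c m)).unop (single (.inl 0) 1) = single m 1 := by
  rcases m with i | j | l
  · exact single_one_rightAction_x_pow b c hb i
  all_goals
    rw [normalMonomial, map_mul, MulOpposite.unop_mul, Module.End.mul_apply,
      single_one_rightAction_x_pow, unop_rightAction_kdQuot_Xg,
      linearCombination_single, one_smul, rightMulTable]

theorem linearIndependent_normalMonomial (hb : b ^ 3 = 1) :
    LinearIndependent k (normalMonomial b c) := by
  let orbit : KoszulDual k b c →ₗ[k] (ℕ ⊕ ℕ ⊕ ℕ) →₀ k :=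
    LinearMap.applyₗ (single (.inl 0) 1) ∘ₗ (MulOpposite.opLinearEquiv k).symm.toLinearMap ∘ₗ
      (rightAction b c hb).toLinearMap
  have orbit_normalMonomial : orbit ∘ normalMonomial b c = fun m => single m 1 :=
    funext (single_one_rightAction_normalMonomial b c hb)
  refine .of_comp orbit ?_
  rw [orbit_normalMonomial]
  exact linearIndependent_single_one _ _

def normalBasis (hb : b ^ 3 = 1) : Module.Basis (ℕ ⊕ ℕ ⊕ ℕ) k (KoszulDual k b c) :=
  .mk (linearIndependent_normalMonomial b c hb) (span_normalMonomial_eq_top b c).ge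

theorem normalBasis_apply (hb : b ^ 3 = 1) (m : ℕ ⊕ ℕ ⊕ ℕ) :
    normalBasis b c hb m = normalMonomial b c m :=
  Module.Basis.mk_apply _ _ m

end KoszulDual

theorem koszul_dual_infinite_dimensional_general
    (k : Type*) [Field k]
    (b c : k) (hb : b ^ 3 = 1) :
    ¬ Module.Finite k (KoszulDual k b c) ∧
    ∃ B : Module.Basis (ℕ ⊕ ℕ ⊕ ℕ) k (KoszulDual k b c),
      (∀ i : ℕ, B (Sum.inl i) = kdQuot k b c (Xg k 0) ^ i) ∧
      (∀ j : ℕ, B (Sum.inr (Sum.inl j)) = kdQuot k b c (Xg k 0) ^ j * kdQuot k b c (Xg k 1)) ∧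
      (∀ l : ℕ, B (Sum.inr (Sum.inr l)) = kdQuot k b c (Xg k 0) ^ l * kdQuot k b c (Xg k 2)) := by
  refine ⟨fun _ => ?_, KoszulDual.normalBasis b c hb, fun i => ?_, fun j => ?_, fun l => ?_⟩
  · have := Module.Finite.finite_basis (KoszulDual.normalBasis b c hb)
    exact not_finite (ℕ ⊕ ℕ ⊕ ℕ)
  all_goals exact KoszulDual.normalBasis_apply b c hb _

theorem koszul_dual_infinite_dimensional
    (k : Type*) [Field k] [IsAlgClosed k] [CharZero k]
    (b c : k) (hb : b ^ 3 = 1) (hc : c ^ 3 = 1) :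
    ¬ Module.Finite k (KoszulDual k b c) ∧
    ∃ B : Module.Basis (ℕ ⊕ ℕ ⊕ ℕ) k (KoszulDual k b c),
      (∀ i : ℕ, B (Sum.inl i) = kdQuot k b c (Xg k 0) ^ i) ∧
      (∀ j : ℕ, B (Sum.inr (Sum.inl j)) = kdQuot k b c (Xg k 0) ^ j * kdQuot k b c (Xg k 1)) ∧
      (∀ l : ℕ, B (Sum.inr (Sum.inr l)) = kdQuot k b c (Xg k 0) ^ l * kdQuot k b c (Xg k 2)) :=
  koszul_dual_infinite_dimensional_general k b c hb
end
end

section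
/- Let a, b, c ∈ k be arbitrary, let d ≥ 2, and let p₀, …, p_{d−1} ∈ k³ be nonzero vectors, p_i = (x_i, y_i, z_i), satisfying the multilinearized Sklyanin relations f_i = g_i = h_i = 0 for all 0 ≤ i ≤ d−2. Then every p_j lies on the cubic curve E_{a,b,c}: for every 0 ≤ j ≤ d−1 one has (a³ + b³ + c³)·x_j·y_j·z_j = a·b·c·(x_j³ + y_j³ + z_j³). -/
/-!
The relations `f_i = g_i = h_i = 0` say that `p_{i+1}` is a nonzero solution of a linear system
whose coefficient matrix is linear in `p_i`; the determinant of that matrix is exactly the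
cubic `(a³+b³+c³)·x·y·z − a·b·c·(x³+y³+z³)` at `p_i`, so it vanishes.  The relations are
symmetric under exchanging `p_i` with `p_{i+1}` and `a` with `b`, which leaves the cubic
unchanged, so the cubic also vanishes at `p_{i+1}`.  Every point has a neighbour since `d ≥ 2`.
-/

/-- The multilinearized Sklyanin relations `f = g = h = 0` between consecutive points
`q = p_i` and `r = p_{i+1}`. -/
def SklyaninRel {k : Type*} [CommRing k] (a b c : k) (q r : Fin 3 → k) : Prop :=
  a * (r 1 * q 2) + b * (r 2 * q 1) + c * (r 0 * q 0) = 0 ∧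
  a * (r 2 * q 0) + b * (r 0 * q 2) + c * (r 1 * q 1) = 0 ∧
  a * (r 0 * q 1) + b * (r 1 * q 0) + c * (r 2 * q 2) = 0

def IsOnSklyaninCubic {k : Type*} [CommRing k] (a b c : k) (q : Fin 3 → k) : Prop :=
  (a ^ 3 + b ^ 3 + c ^ 3) * (q 0 * q 1 * q 2) = a * b * c * (q 0 ^ 3 + q 1 ^ 3 + q 2 ^ 3)

namespace SklyaninRel

variable {k : Type*} [CommRing k] {a b c : k} {q r : Fin 3 → k}

theorem swap (h : SklyaninRel a b c q r) : SklyaninRel b a c r q := by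
  obtain ⟨hf, hg, hh⟩ := h
  exact ⟨by linear_combination hf, by linear_combination hg, by linear_combination hh⟩

/-- Cramer's rule: the cubic at `q` is the determinant of the system solved by `r`, and the
multipliers below are the rows of its adjugate. -/
theorem cubic_mul_eq_zero (h : SklyaninRel a b c q r) (m : Fin 3) :
    ((a ^ 3 + b ^ 3 + c ^ 3) * (q 0 * q 1 * q 2)
      - a * b * c * (q 0 ^ 3 + q 1 ^ 3 + q 2 ^ 3)) * r m = 0 := by
  obtain ⟨hf, hg, hh⟩ := h
  match m with
  | 0 =>
    linear_combination (c ^ 2 * q 1 * q 2 - a * b * q 0 ^ 2) * hf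
      + (b ^ 2 * q 0 * q 1 - a * c * q 2 ^ 2) * hg
      + (a ^ 2 * q 0 * q 2 - b * c * q 1 ^ 2) * hh
  | 1 =>
    linear_combination (a ^ 2 * q 0 * q 1 - b * c * q 2 ^ 2) * hf
      + (c ^ 2 * q 0 * q 2 - a * b * q 1 ^ 2) * hg
      + (b ^ 2 * q 1 * q 2 - a * c * q 0 ^ 2) * hh
  | 2 =>
    linear_combination (b ^ 2 * q 0 * q 2 - a * c * q 1 ^ 2) * hf
      + (a ^ 2 * q 1 * q 2 - b * c * q 0 ^ 2) * hg
      + (c ^ 2 * q 0 * q 1 - a * b * q 2 ^ 2) * hh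

variable [NoZeroDivisors k]

theorem isOnSklyaninCubic_left (h : SklyaninRel a b c q r) (hr : r ≠ 0) :
    IsOnSklyaninCubic a b c q := by
  obtain ⟨m, hm⟩ := Function.ne_iff.mp hr
  exact sub_eq_zero.mp ((mul_eq_zero.mp (h.cubic_mul_eq_zero m)).resolve_right hm)

theorem isOnSklyaninCubic_right (h : SklyaninRel a b c q r) (hq : q ≠ 0) :
    IsOnSklyaninCubic a b c r := by
  have hr : IsOnSklyaninCubic b a c r := h.swap.isOnSklyaninCubic_left hq
  unfold IsOnSklyaninCubic at hr ⊢
  linear_combination hr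

end SklyaninRel

theorem truncated_point_scheme_lies_on_cubic
    (k : Type*) [Field k]
    (a b c : k) (d : ℕ) (hd : 2 ≤ d)
    (p : Fin d → Fin 3 → k)
    (hnz : ∀ i : Fin d, p i ≠ 0)
    (hrel : ∀ (i : ℕ) (hi : i + 1 < d),
      a * (p ⟨i + 1, hi⟩ 1 * p ⟨i, by omega⟩ 2)
          + b * (p ⟨i + 1, hi⟩ 2 * p ⟨i, by omega⟩ 1)
          + c * (p ⟨i + 1, hi⟩ 0 * p ⟨i, by omega⟩ 0) = 0 ∧
      a * (p ⟨i + 1, hi⟩ 2 * p ⟨i, by omega⟩ 0)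
          + b * (p ⟨i + 1, hi⟩ 0 * p ⟨i, by omega⟩ 2)
          + c * (p ⟨i + 1, hi⟩ 1 * p ⟨i, by omega⟩ 1) = 0 ∧
      a * (p ⟨i + 1, hi⟩ 0 * p ⟨i, by omega⟩ 1)
          + b * (p ⟨i + 1, hi⟩ 1 * p ⟨i, by omega⟩ 0)
          + c * (p ⟨i + 1, hi⟩ 2 * p ⟨i, by omega⟩ 2) = 0) :
    ∀ j : Fin d,
      (a ^ 3 + b ^ 3 + c ^ 3) * (p j 0 * p j 1 * p j 2)
        = a * b * c * (p j 0 ^ 3 + p j 1 ^ 3 + p j 2 ^ 3) := by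
  have hrel' (i : ℕ) (hi : i + 1 < d) :
      SklyaninRel a b c (p ⟨i, by omega⟩) (p ⟨i + 1, hi⟩) := hrel i hi
  rintro ⟨j, hj⟩
  by_cases hnext : j + 1 < d
  · exact (hrel' j hnext).isOnSklyaninCubic_left (hnz _)
  · obtain _ | i := j
    · omega
    · exact (hrel' i hj).isOnSklyaninCubic_right (hnz _)
end

section
/- Consider the multilinearized relations of S(1,1,1) (a = b = c = 1). Let ω ∈ k with ω³ = 1, let p₀ = λ·e_ω for some λ ≠ 0, and let p₁ = (x₁,y₁,z₁) ∈ k³ be nonzero. Then the equations y₁z₀ + z₁y₀ + x₁x₀ = 0, z₁x₀ + x₁z₀ + y₁y₀ = 0, x₁y₀ + y₁x₀ + z₁z₀ = 0 hold if and only if p₁ ∈ L_ω, i.e. x₁ + ω²·y₁ + ω·z₁ = 0. In particular, for every [y₁ : z₁] ∈ ℙ¹ there is exactly one x₁ making (x₁,y₁,z₁) a solution, so the solutions form a ℙ¹. -/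
/-!
Since `ω³ = 1`, at `p₀ = l · e_ω` the three relations are the multiples `l`, `l ω²` and `l ω`
of the single linear form `x₁ + ω² y₁ + ω z₁`; as `l ≠ 0` they vanish together exactly when that
form does, and the form determines `x₁` from `(y₁, z₁)`.
-/

namespace Sklyanin111

variable {R : Type*} [CommRing R] {ω : R}

theorem relF_eq (l x y z : R) :
    y * (l * ω ^ 2) + z * (l * ω) + x * l = l * (x + ω ^ 2 * y + ω * z) := by
  ring

theorem relG_eq (hω : ω ^ 3 = 1) (l x y z : R) :
    z * l + x * (l * ω ^ 2) + y * (l * ω) = l * ω ^ 2 * (x + ω ^ 2 * y + ω * z) := by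
  linear_combination -(l * ω * y + l * z) * hω

theorem relH_eq (hω : ω ^ 3 = 1) (l x y z : R) :
    x * (l * ω) + y * l + z * (l * ω ^ 2) = l * ω * (x + ω ^ 2 * y + ω * z) := by
  linear_combination -l * y * hω

theorem rels_eq_zero_iff [NoZeroDivisors R] (hω : ω ^ 3 = 1) {l : R} (hl : l ≠ 0) (x y z : R) :
    (y * (l * ω ^ 2) + z * (l * ω) + x * l = 0 ∧
      z * l + x * (l * ω ^ 2) + y * (l * ω) = 0 ∧
      x * (l * ω) + y * l + z * (l * ω ^ 2) = 0) ↔ x + ω ^ 2 * y + ω * z = 0 := by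
  rw [relF_eq, relG_eq hω, relH_eq hω]
  refine ⟨fun h => (mul_eq_zero.mp h.1).resolve_left hl, fun h => ?_⟩
  simp only [h, mul_zero, and_self]

end Sklyanin111

open Sklyanin111 in
theorem relations_at_point_of_Z1_general
    (k : Type*) [Field k]
    (ω l x₁ y₁ z₁ : k) (hω : ω ^ 3 = 1) (hl : l ≠ 0) :
    ((y₁ * (l * ω ^ 2) + z₁ * (l * ω) + x₁ * l = 0 ∧
      z₁ * l + x₁ * (l * ω ^ 2) + y₁ * (l * ω) = 0 ∧
      x₁ * (l * ω) + y₁ * l + z₁ * (l * ω ^ 2) = 0)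
        ↔ x₁ + ω ^ 2 * y₁ + ω * z₁ = 0) ∧
    (∀ Y Z : k, ¬(Y = 0 ∧ Z = 0) →
      ∃! X : k,
        Y * (l * ω ^ 2) + Z * (l * ω) + X * l = 0 ∧
        Z * l + X * (l * ω ^ 2) + Y * (l * ω) = 0 ∧
        X * (l * ω) + Y * l + Z * (l * ω ^ 2) = 0) := by
  refine ⟨rels_eq_zero_iff hω hl x₁ y₁ z₁, fun Y Z _ => ?_⟩
  simp only [rels_eq_zero_iff hω hl]
  exact ⟨-(ω ^ 2 * Y + ω * Z), by ring, fun X hX => by linear_combination hX⟩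

theorem relations_at_point_of_Z1
    (k : Type*) [Field k] [IsAlgClosed k] [CharZero k]
    (ω l x₁ y₁ z₁ : k) (hω : ω ^ 3 = 1) (hl : l ≠ 0)
    (hp₁ : ¬(x₁ = 0 ∧ y₁ = 0 ∧ z₁ = 0)) :
    ((y₁ * (l * ω ^ 2) + z₁ * (l * ω) + x₁ * l = 0 ∧
      z₁ * l + x₁ * (l * ω ^ 2) + y₁ * (l * ω) = 0 ∧
      x₁ * (l * ω) + y₁ * l + z₁ * (l * ω ^ 2) = 0)
        ↔ x₁ + ω ^ 2 * y₁ + ω * z₁ = 0) ∧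
    (∀ Y Z : k, ¬(Y = 0 ∧ Z = 0) →
      ∃! X : k,
        Y * (l * ω ^ 2) + Z * (l * ω) + X * l = 0 ∧
        Z * l + X * (l * ω ^ 2) + Y * (l * ω) = 0 ∧
        X * (l * ω) + Y * l + Z * (l * ω ^ 2) = 0) :=
  relations_at_point_of_Z1_general k ω l x₁ y₁ z₁ hω hl
end

section
/- Consider the multilinearized relations of S(1,1,1). Let p₀ = (x₀,y₀,z₀) ∈ k³ be nonzero with x₀³ + y₀³ + z₀³ = 3·x₀·y₀·z₀ (so p₀ lies on the cubic E), and suppose p₀ is not a scalar multiple of e_ω for any ω with ω³ = 1 (i.e. p₀ ∉ Z₁). Then there exists a unique ω ∈ k with ω³ = 1 such that, for every nonzero p₁ ∈ k³, the equations f₀ = g₀ = h₀ = 0 hold if and only if p₁ is a nonzero scalar multiple of e_ω; moreover for this ω one has p₀ ∈ L_ω. In particular the solution p₁ exists, is unique up to scalar, and lies in Z₁. -/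
/-!
Write `ℓ_ν(x, y, z) = x + ν²y + νz`, so that `L_ν = {ℓ_ν = 0}`. For `ν³ = 1` the relations
diagonalise: `f₀ + ν g₀ + ν² h₀ = ℓ_ν(p₀) ℓ_ν(p₁)`. Since `x³ + y³ + z³ - 3xyz = ℓ₁ ℓ_ζ ℓ_{ζ²}`,
the point `p₀` lies on some `L_ω`, and on no other line `L_{ζω}`, `L_{ζ²ω}`, because two of these
lines meet in `Z₁`. So the relations hold iff `p₁ ∈ L_{ζω} ∩ L_{ζ²ω} = k e_ω`. As `e_ω` is then a
solution, it must be a multiple of `e_{ω'}` for any other admissible `ω'`, which forces `ω' = ω`.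
-/

theorem IsPrimitiveRoot.sq_add_self_add_one {R : Type*} [CommRing R] [IsDomain R] {η : R}
    (hη : IsPrimitiveRoot η 3) : η ^ 2 + η + 1 = 0 := by
  have h := hη.geom_sum_eq_zero (by norm_num)
  simp only [Finset.sum_range_succ, Finset.sum_range_zero, pow_zero, pow_one] at h
  linear_combination h

namespace DegenerateSklyanin

variable {k : Type*} [CommRing k]

def lineForm (ω x y z : k) : k := x + ω ^ 2 * y + ω * z

theorem cubic_sub_eq_mul_lineForm {ζ : k} (hζ : ζ ^ 2 + ζ + 1 = 0) (x y z : k) :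
    x ^ 3 + y ^ 3 + z ^ 3 - 3 * (x * y * z) =
      lineForm 1 x y z * lineForm ζ x y z * lineForm (ζ ^ 2) x y z := by
  unfold lineForm
  linear_combination (-(x + y + z) * (x * y + y * z + z * x)
    - (x + y + z) * (ζ - 1) * (ζ * x * y + (ζ ^ 3 + 1) * y ^ 2 + ζ * y * z + ζ ^ 2 * y * z + z ^ 2))
    * hζ

theorem relations_combination_eq_lineForm_mul (x₀ y₀ z₀ x₁ y₁ z₁ : k) {ν : k} (hν : ν ^ 3 = 1) :
    (y₁ * z₀ + z₁ * y₀ + x₁ * x₀) + ν * (z₁ * x₀ + x₁ * z₀ + y₁ * y₀) +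
        ν ^ 2 * (x₁ * y₀ + y₁ * x₀ + z₁ * z₀) =
      lineForm ν x₀ y₀ z₀ * lineForm ν x₁ y₁ z₁ := by
  unfold lineForm
  linear_combination (-(ν * y₀ * y₁) - z₀ * y₁ - y₀ * z₁) * hν

theorem relations_eq_zero_of_lineForm_eq_zero {x₀ y₀ z₀ ω : k} (hω : ω ^ 3 = 1)
    (hL : lineForm ω x₀ y₀ z₀ = 0) (μ : k) :
    (μ * ω) * z₀ + (μ * ω ^ 2) * y₀ + μ * x₀ = 0 ∧
      (μ * ω ^ 2) * x₀ + μ * z₀ + (μ * ω) * y₀ = 0 ∧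
      μ * y₀ + (μ * ω) * x₀ + (μ * ω ^ 2) * z₀ = 0 := by
  unfold lineForm at hL
  refine ⟨?_, ?_, ?_⟩
  · linear_combination μ * hL
  · linear_combination μ * ω ^ 2 * hL - μ * (ω * y₀ + z₀) * hω
  · linear_combination μ * ω * hL - μ * y₀ * hω

variable [IsDomain k]

theorem exists_lineForm_eq_zero {ζ : k} (hζ : IsPrimitiveRoot ζ 3) {x y z : k}
    (hE : x ^ 3 + y ^ 3 + z ^ 3 = 3 * (x * y * z)) : ∃ ω : k, ω ^ 3 = 1 ∧ lineForm ω x y z = 0 := by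
  have h : lineForm 1 x y z * lineForm ζ x y z * lineForm (ζ ^ 2) x y z = 0 := by
    rw [← cubic_sub_eq_mul_lineForm hζ.sq_add_self_add_one, hE, sub_self]
  rcases mul_eq_zero.mp h with h | h
  · rcases mul_eq_zero.mp h with h | h
    · exact ⟨1, one_pow 3, h⟩
    · exact ⟨ζ, hζ.pow_eq_one, h⟩
  · exact ⟨ζ ^ 2, (hζ.pow_of_coprime 2 (by norm_num)).pow_eq_one, h⟩

theorem eq_mul_of_lineForm_eq_zero {η ω x y z : k} (hη : IsPrimitiveRoot η 3) (hω : ω ^ 3 = 1)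
    (h₁ : lineForm (η * ω) x y z = 0) (h₂ : lineForm (η ^ 2 * ω) x y z = 0) :
    y = x * ω ∧ z = x * ω ^ 2 := by
  unfold lineForm at h₁ h₂
  have hη₀ := hη.sq_add_self_add_one
  have hη₃ := hη.pow_eq_one
  have hω₀ : ω ≠ 0 := by rintro rfl; norm_num at hω
  have hne : η * ω * (1 - η) ≠ 0 :=
    mul_ne_zero (mul_ne_zero (hη.ne_zero (by norm_num)) hω₀)
      (sub_ne_zero.mpr (hη.ne_one (by norm_num)).symm)
  have hz : z = ω * y := by
    have : η * ω * (1 - η) * (η * ω * (1 + η) * y + z) = 0 := by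
      linear_combination h₁ - h₂
    linear_combination (mul_eq_zero.mp this).resolve_left hne - η * ω * y * hη₀ + ω * y * hη₃
  have hx : x = ω ^ 2 * y := by linear_combination h₁ - η * ω * hz - ω ^ 2 * y * hη₀
  have hy : y = x * ω := by linear_combination -ω * hx - y * hω
  exact ⟨hy, by linear_combination hz + ω * hy⟩

theorem exists_eq_mul_of_lineForm_eq_zero {η ω x y z : k} (hη : IsPrimitiveRoot η 3)
    (hω : ω ^ 3 = 1) (h₁ : lineForm ω x y z = 0) (h₂ : lineForm (η * ω) x y z = 0) :
    ∃ ν μ : k, ν ^ 3 = 1 ∧ x = μ ∧ y = μ * ν ∧ z = μ * ν ^ 2 := by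
  have hη₃ := hη.pow_eq_one
  have h₁' : lineForm (η * (η ^ 2 * ω)) x y z = 0 := by
    rwa [show η * (η ^ 2 * ω) = ω by linear_combination ω * hη₃]
  have h₂' : lineForm (η ^ 2 * (η ^ 2 * ω)) x y z = 0 := by
    rwa [show η ^ 2 * (η ^ 2 * ω) = η * ω by linear_combination η * ω * hη₃]
  have hν : (η ^ 2 * ω) ^ 3 = 1 := by linear_combination ω ^ 3 * (η ^ 3 + 1) * hη₃ + hω
  exact ⟨η ^ 2 * ω, x, hν, rfl, eq_mul_of_lineForm_eq_zero hη hν h₁' h₂'⟩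

theorem eq_mul_of_relations_eq_zero {x₀ y₀ z₀ x₁ y₁ z₁ ζ ω : k} (hζ : IsPrimitiveRoot ζ 3)
    (hω : ω ^ 3 = 1) (h₁ : lineForm (ζ * ω) x₀ y₀ z₀ ≠ 0) (h₂ : lineForm (ζ ^ 2 * ω) x₀ y₀ z₀ ≠ 0)
    (hrel : y₁ * z₀ + z₁ * y₀ + x₁ * x₀ = 0 ∧ z₁ * x₀ + x₁ * z₀ + y₁ * y₀ = 0 ∧
      x₁ * y₀ + y₁ * x₀ + z₁ * z₀ = 0) :
    y₁ = x₁ * ω ∧ z₁ = x₁ * ω ^ 2 := by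
  obtain ⟨hf, hg, hh⟩ := hrel
  have vanish : ∀ ν : k, ν ^ 3 = 1 → lineForm ν x₀ y₀ z₀ ≠ 0 → lineForm ν x₁ y₁ z₁ = 0 :=
    fun ν hν hne ↦ (mul_eq_zero.mp <| by
      rw [← relations_combination_eq_lineForm_mul x₀ y₀ z₀ x₁ y₁ z₁ hν, hf, hg, hh]
      ring).resolve_left hne
  have hζ₃ := hζ.pow_eq_one
  exact eq_mul_of_lineForm_eq_zero hζ hω
    (vanish _ (by linear_combination ω ^ 3 * hζ₃ + hω) h₁)
    (vanish _ (by linear_combination ω ^ 3 * (ζ ^ 3 + 1) * hζ₃ + hω) h₂)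

end DegenerateSklyanin

open DegenerateSklyanin in
theorem unique_continuation_off_Z1_general
    (k : Type*) [Field k] [IsAlgClosed k] [CharZero k]
    (x₀ y₀ z₀ : k)
    (hE : x₀ ^ 3 + y₀ ^ 3 + z₀ ^ 3 = 3 * (x₀ * y₀ * z₀))
    (hnotZ : ¬ ∃ ω μ : k, ω ^ 3 = 1 ∧ x₀ = μ ∧ y₀ = μ * ω ∧ z₀ = μ * ω ^ 2) :
    ∃! ω : k, ω ^ 3 = 1 ∧
      (∀ x₁ y₁ z₁ : k, ¬(x₁ = 0 ∧ y₁ = 0 ∧ z₁ = 0) →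
        ((y₁ * z₀ + z₁ * y₀ + x₁ * x₀ = 0 ∧
          z₁ * x₀ + x₁ * z₀ + y₁ * y₀ = 0 ∧
          x₁ * y₀ + y₁ * x₀ + z₁ * z₀ = 0)
            ↔ ∃ μ : k, μ ≠ 0 ∧ x₁ = μ ∧ y₁ = μ * ω ∧ z₁ = μ * ω ^ 2)) ∧
      x₀ + ω ^ 2 * y₀ + ω * z₀ = 0 := by
  obtain ⟨ζ, hζ⟩ := HasEnoughRootsOfUnity.exists_primitiveRoot k 3
  obtain ⟨ω, hω, hL⟩ := exists_lineForm_eq_zero hζ hE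
  have off_line : ∀ η : k, IsPrimitiveRoot η 3 → lineForm (η * ω) x₀ y₀ z₀ ≠ 0 :=
    fun η hη h ↦ hnotZ (exists_eq_mul_of_lineForm_eq_zero hη hω hL h)
  have solutions : ∀ x₁ y₁ z₁ : k, ¬(x₁ = 0 ∧ y₁ = 0 ∧ z₁ = 0) →
      ((y₁ * z₀ + z₁ * y₀ + x₁ * x₀ = 0 ∧ z₁ * x₀ + x₁ * z₀ + y₁ * y₀ = 0 ∧
          x₁ * y₀ + y₁ * x₀ + z₁ * z₀ = 0)
        ↔ ∃ μ : k, μ ≠ 0 ∧ x₁ = μ ∧ y₁ = μ * ω ∧ z₁ = μ * ω ^ 2) := by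
    intro x₁ y₁ z₁ hp₁
    constructor
    · intro hrel
      obtain ⟨hy, hz⟩ := eq_mul_of_relations_eq_zero hζ hω (off_line ζ hζ)
        (off_line _ (hζ.pow_of_coprime 2 (by norm_num))) hrel
      exact ⟨x₁, fun hx ↦ hp₁ ⟨hx, by simp [hy, hx], by simp [hz, hx]⟩, rfl, hy, hz⟩
    · rintro ⟨_, -, rfl, rfl, rfl⟩
      exact relations_eq_zero_of_lineForm_eq_zero hω hL _
  refine ⟨ω, ⟨hω, solutions, hL⟩, ?_⟩
  rintro ω' ⟨-, solutions', -⟩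
  obtain ⟨_, -, rfl, h, -⟩ := (solutions' 1 ω (ω ^ 2) (by simp)).mp
    ((solutions 1 ω (ω ^ 2) (by simp)).mpr ⟨1, one_ne_zero, rfl, by ring, by ring⟩)
  simpa using h.symm

theorem unique_continuation_off_Z1
    (k : Type*) [Field k] [IsAlgClosed k] [CharZero k]
    (x₀ y₀ z₀ : k)
    (hnz : ¬(x₀ = 0 ∧ y₀ = 0 ∧ z₀ = 0))
    (hE : x₀ ^ 3 + y₀ ^ 3 + z₀ ^ 3 = 3 * (x₀ * y₀ * z₀))
    (hnotZ : ¬ ∃ ω μ : k, ω ^ 3 = 1 ∧ x₀ = μ ∧ y₀ = μ * ω ∧ z₀ = μ * ω ^ 2) :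
    ∃! ω : k, ω ^ 3 = 1 ∧
      (∀ x₁ y₁ z₁ : k, ¬(x₁ = 0 ∧ y₁ = 0 ∧ z₁ = 0) →
        ((y₁ * z₀ + z₁ * y₀ + x₁ * x₀ = 0 ∧
          z₁ * x₀ + x₁ * z₀ + y₁ * y₀ = 0 ∧
          x₁ * y₀ + y₁ * x₀ + z₁ * z₀ = 0)
            ↔ ∃ μ : k, μ ≠ 0 ∧ x₁ = μ ∧ y₁ = μ * ω ∧ z₁ = μ * ω ^ 2)) ∧
      x₀ + ω ^ 2 * y₀ + ω * z₀ = 0 :=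
  unique_continuation_off_Z1_general k x₀ y₀ z₀ hE hnotZ
end

section
/- Consider the multilinearized relations of S(1,1,1). Let p₀, p₁ ∈ k³ both be nonzero. Then f₀ = g₀ = h₀ = 0 holds if and only if there exists ω ∈ k with ω³ = 1 such that either (p₀ ∈ L_ω and p₁ is a nonzero scalar multiple of e_ω) or (p₀ is a nonzero scalar multiple of e_ω and p₁ ∈ L_ω). Thus the truncated point scheme V₂ of S(1,1,1) is the union of six components, each isomorphic to ℙ¹ (a line crossed with a point of Z₁, or a point of Z₁ crossed with a line). -/
/-!
Writing `L_ω(p) = x + ω²y + ωz`, one has `f₀ + ω g₀ + ω² h₀ = L_ω(p₀) L_ω(p₁)` for every cube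
root of unity `ω`, and `p ↦ (L_ω(p))_ω` is a discrete Fourier transform, hence invertible. So the
relations say that the Fourier transforms of `p₀` and `p₁` have disjoint supports in the
three-element set of cube roots of unity. Both supports are nonempty, so one of them is a single
root `ω`, and a vector whose Fourier transform is supported at `ω` is a multiple of `e_ω`.
-/

section
variable {k : Type*} [Field k]

def lineForm (ω x y z : k) : k := x + ω ^ 2 * y + ω * z

lemma lineForm_mul_lineForm {c : k} (hc : c ^ 3 = 1) (x₀ y₀ z₀ x₁ y₁ z₁ : k) :
    lineForm c x₀ y₀ z₀ * lineForm c x₁ y₁ z₁ =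
      (y₁ * z₀ + z₁ * y₀ + x₁ * x₀) + c * (z₁ * x₀ + x₁ * z₀ + y₁ * y₀) +
        c ^ 2 * (x₁ * y₀ + y₁ * x₀ + z₁ * z₀) := by
  unfold lineForm
  linear_combination (c * y₀ * y₁ + z₀ * y₁ + y₀ * z₁) * hc

lemma lineForm_rotate {c : k} (hc : c ^ 3 = 1) (x y z : k) :
    lineForm c y z x = c * lineForm c x y z := by
  unfold lineForm
  linear_combination -y * hc

lemma sum_lineForm {ζ : k} (hζ : ζ ^ 2 + ζ + 1 = 0) (ω x y z : k) :
    lineForm ω x y z + lineForm (ζ * ω) x y z + lineForm (ζ ^ 2 * ω) x y z = 3 * x := by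
  unfold lineForm
  linear_combination (ω ^ 2 * y * (ζ ^ 2 - ζ + 1) + ω * z) * hζ

lemma pow_three_mul_eq_one {ζ ω : k} (hζ : ζ ^ 2 + ζ + 1 = 0) (hω : ω ^ 3 = 1) :
    (ζ * ω) ^ 3 = 1 ∧ (ζ ^ 2 * ω) ^ 3 = 1 := by
  have hζ₃ : ζ ^ 3 = 1 := by linear_combination (ζ - 1) * hζ
  exact ⟨by rw [mul_pow, hζ₃, hω, one_mul], by rw [mul_pow, ← pow_mul, pow_mul', hζ₃, hω]; ring⟩

lemma eq_mul_of_lineForm_eq_zero {ζ ω x y z : k} (hζ : ζ ^ 2 + ζ + 1 = 0) (hω : ω ^ 3 = 1)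
    (h3 : (3 : k) ≠ 0) (h₁ : lineForm (ζ * ω) x y z = 0) (h₂ : lineForm (ζ ^ 2 * ω) x y z = 0) :
    y = x * ω ∧ z = x * ω ^ 2 := by
  obtain ⟨hω₁, hω₂⟩ := pow_three_mul_eq_one hζ hω
  have hx := sum_lineForm hζ ω x y z
  have hy := sum_lineForm hζ ω y z x
  have hz := sum_lineForm hζ ω z x y
  rw [lineForm_rotate hω x y z, lineForm_rotate hω₁ x y z, lineForm_rotate hω₂ x y z] at hy
  rw [lineForm_rotate hω y z x, lineForm_rotate hω₁ y z x, lineForm_rotate hω₂ y z x,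
    lineForm_rotate hω x y z, lineForm_rotate hω₁ x y z, lineForm_rotate hω₂ x y z] at hz
  rw [h₁, h₂] at hx hy hz
  constructor
  · refine mul_left_cancel₀ h3 ?_
    linear_combination -hy + ω * hx
  · refine mul_left_cancel₀ h3 ?_
    linear_combination -hz + ω ^ 2 * hx

lemma eq_zero_of_lineForm_eq_zero {ζ ω x y z : k} (hζ : ζ ^ 2 + ζ + 1 = 0) (hω : ω ^ 3 = 1)
    (h3 : (3 : k) ≠ 0) (h₀ : lineForm ω x y z = 0) (h₁ : lineForm (ζ * ω) x y z = 0)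
    (h₂ : lineForm (ζ ^ 2 * ω) x y z = 0) : x = 0 ∧ y = 0 ∧ z = 0 := by
  obtain ⟨hy, hz⟩ := eq_mul_of_lineForm_eq_zero hζ hω h3 h₁ h₂
  have hx : 3 * x = 0 := by rw [← sum_lineForm hζ ω x y z, h₀, h₁, h₂, add_zero, add_zero]
  have hx : x = 0 := (mul_eq_zero.mp hx).resolve_left h3
  simp [hx, hy, hz]

lemma exists_eq_mul_of_lineForm_eq_zero {ζ ω x y z : k} (hζ : ζ ^ 2 + ζ + 1 = 0)
    (hω : ω ^ 3 = 1) (h3 : (3 : k) ≠ 0) (h₁ : lineForm (ζ * ω) x y z = 0)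
    (h₂ : lineForm (ζ ^ 2 * ω) x y z = 0) (hp : ¬(x = 0 ∧ y = 0 ∧ z = 0)) :
    ∃ μ : k, μ ≠ 0 ∧ x = μ ∧ y = μ * ω ∧ z = μ * ω ^ 2 := by
  obtain ⟨hy, hz⟩ := eq_mul_of_lineForm_eq_zero hζ hω h3 h₁ h₂
  refine ⟨x, fun hx => hp ⟨hx, ?_, ?_⟩, rfl, hy, hz⟩ <;> simp [hx, hy, hz]

lemma exists_lineForm_support {ζ x₀ y₀ z₀ x₁ y₁ z₁ : k} (hζ : ζ ^ 2 + ζ + 1 = 0)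
    (h3 : (3 : k) ≠ 0)
    (hrel : ∀ c : k, c ^ 3 = 1 → lineForm c x₀ y₀ z₀ * lineForm c x₁ y₁ z₁ = 0)
    (hp₀ : ¬(x₀ = 0 ∧ y₀ = 0 ∧ z₀ = 0)) (hp₁ : ¬(x₁ = 0 ∧ y₁ = 0 ∧ z₁ = 0)) :
    ∃ ω : k, ω ^ 3 = 1 ∧
      ((lineForm ω x₀ y₀ z₀ = 0 ∧ lineForm (ζ * ω) x₁ y₁ z₁ = 0 ∧
          lineForm (ζ ^ 2 * ω) x₁ y₁ z₁ = 0) ∨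
        (lineForm (ζ * ω) x₀ y₀ z₀ = 0 ∧ lineForm (ζ ^ 2 * ω) x₀ y₀ z₀ = 0 ∧
          lineForm ω x₁ y₁ z₁ = 0)) := by
  have hζ₃ : ζ ^ 3 = 1 := by linear_combination (ζ - 1) * hζ
  obtain ⟨ω, hω, hb⟩ : ∃ ω : k, ω ^ 3 = 1 ∧ lineForm ω x₁ y₁ z₁ ≠ 0 := by
    by_contra! h
    have h1 : (1 : k) ^ 3 = 1 := one_pow 3
    exact hp₁ (eq_zero_of_lineForm_eq_zero hζ h1 h3 (h 1 h1) (h _ (pow_three_mul_eq_one hζ h1).1)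
      (h _ (pow_three_mul_eq_one hζ h1).2))
  obtain ⟨hω₁, hω₂⟩ := pow_three_mul_eq_one hζ hω
  -- `ω` is in the support of `p₁`; if that support is not `{ω}`, the support of `p₀` is the
  -- remaining root.
  have ha : lineForm ω x₀ y₀ z₀ = 0 := (mul_eq_zero.mp (hrel ω hω)).resolve_right hb
  by_cases hb₁ : lineForm (ζ * ω) x₁ y₁ z₁ = 0
  · by_cases hb₂ : lineForm (ζ ^ 2 * ω) x₁ y₁ z₁ = 0
    · exact ⟨ω, hω, .inl ⟨ha, hb₁, hb₂⟩⟩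
    have ha₂ : lineForm (ζ ^ 2 * ω) x₀ y₀ z₀ = 0 :=
      (mul_eq_zero.mp (hrel _ hω₂)).resolve_right hb₂
    refine ⟨ζ * ω, hω₁, .inr ⟨?_, ?_, hb₁⟩⟩
    · rwa [show ζ * (ζ * ω) = ζ ^ 2 * ω by ring]
    · rwa [show ζ ^ 2 * (ζ * ω) = ω by linear_combination ω * hζ₃]
  · have ha₁ : lineForm (ζ * ω) x₀ y₀ z₀ = 0 := (mul_eq_zero.mp (hrel _ hω₁)).resolve_right hb₁
    have ha₂ : lineForm (ζ ^ 2 * ω) x₀ y₀ z₀ ≠ 0 := fun ha₂ =>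
      hp₀ (eq_zero_of_lineForm_eq_zero hζ hω h3 ha ha₁ ha₂)
    have hb₂ : lineForm (ζ ^ 2 * ω) x₁ y₁ z₁ = 0 :=
      (mul_eq_zero.mp (hrel _ hω₂)).resolve_left ha₂
    refine ⟨ζ ^ 2 * ω, hω₂, .inr ⟨?_, ?_, hb₂⟩⟩
    · rwa [show ζ * (ζ ^ 2 * ω) = ω by linear_combination ω * hζ₃]
    · rwa [show ζ ^ 2 * (ζ ^ 2 * ω) = ζ * ω by linear_combination ζ * ω * hζ₃]

lemma relations_of_lineForm_eq_zero {ω x y z : k} (hω : ω ^ 3 = 1) (hL : lineForm ω x y z = 0)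
    (μ : k) :
    μ * ω * z + μ * ω ^ 2 * y + μ * x = 0 ∧
    μ * ω ^ 2 * x + μ * z + μ * ω * y = 0 ∧
    μ * y + μ * ω * x + μ * ω ^ 2 * z = 0 := by
  unfold lineForm at hL
  exact ⟨by linear_combination μ * hL,
    by linear_combination μ * ω ^ 2 * hL - μ * (z + ω * y) * hω,
    by linear_combination μ * ω * hL - μ * y * hω⟩

lemma exists_sq_add_self_add_one_eq_zero [IsAlgClosed k] [CharZero k] :
    ∃ ζ : k, ζ ^ 2 + ζ + 1 = 0 := by
  obtain ⟨s, hs⟩ := IsAlgClosed.exists_pow_nat_eq (-3 : k) two_pos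
  exact ⟨(s - 1) / 2, by linear_combination hs / 4⟩

end

theorem V2_description
    (k : Type*) [Field k] [IsAlgClosed k] [CharZero k]
    (x₀ y₀ z₀ x₁ y₁ z₁ : k)
    (hp₀ : ¬(x₀ = 0 ∧ y₀ = 0 ∧ z₀ = 0))
    (hp₁ : ¬(x₁ = 0 ∧ y₁ = 0 ∧ z₁ = 0)) :
    (y₁ * z₀ + z₁ * y₀ + x₁ * x₀ = 0 ∧
     z₁ * x₀ + x₁ * z₀ + y₁ * y₀ = 0 ∧
     x₁ * y₀ + y₁ * x₀ + z₁ * z₀ = 0)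
      ↔ ∃ ω : k, ω ^ 3 = 1 ∧
          ((x₀ + ω ^ 2 * y₀ + ω * z₀ = 0 ∧
              ∃ μ : k, μ ≠ 0 ∧ x₁ = μ ∧ y₁ = μ * ω ∧ z₁ = μ * ω ^ 2) ∨
           ((∃ μ : k, μ ≠ 0 ∧ x₀ = μ ∧ y₀ = μ * ω ∧ z₀ = μ * ω ^ 2) ∧
              x₁ + ω ^ 2 * y₁ + ω * z₁ = 0)) := by
  constructor
  · rintro ⟨hf, hg, hh⟩
    obtain ⟨ζ, hζ⟩ := exists_sq_add_self_add_one_eq_zero (k := k)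
    have h3 : (3 : k) ≠ 0 := three_ne_zero
    have hrel : ∀ c : k, c ^ 3 = 1 → lineForm c x₀ y₀ z₀ * lineForm c x₁ y₁ z₁ = 0 :=
      fun c hc => by rw [lineForm_mul_lineForm hc, hf, hg, hh]; ring
    obtain ⟨ω, hω, ⟨hL, h₁, h₂⟩ | ⟨h₁, h₂, hL⟩⟩ := exists_lineForm_support hζ h3 hrel hp₀ hp₁
    · exact ⟨ω, hω, .inl ⟨hL, exists_eq_mul_of_lineForm_eq_zero hζ hω h3 h₁ h₂ hp₁⟩⟩
    · exact ⟨ω, hω, .inr ⟨exists_eq_mul_of_lineForm_eq_zero hζ hω h3 h₁ h₂ hp₀, hL⟩⟩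
  · rintro ⟨ω, hω, ⟨hL, -, -, rfl, rfl, rfl⟩ | ⟨⟨-, -, rfl, rfl, rfl⟩, hL⟩⟩
    · exact relations_of_lineForm_eq_zero hω hL x₁
    · obtain ⟨hf, hg, hh⟩ := relations_of_lineForm_eq_zero hω hL x₀
      exact ⟨by linear_combination hf, by linear_combination hg, by linear_combination hh⟩
end

section
/- Consider bihomogeneous polynomials of bidegree (1,1) in the two groups of variables (x₀,y₀,z₀) and (x₁,y₁,z₁) over k (a 9-dimensional k-vector space). Such a polynomial P vanishes at every point of the truncated point scheme V₂ of S(1,1,1) if and only if P lies in the k-linear span of f₀ = y₁z₀ + z₁y₀ + x₁x₀, g₀ = z₁x₀ + x₁z₀ + y₁y₀, and h₀ = x₁y₀ + y₁x₀ + z₁z₀. In particular, the space of bidegree-(1,1) forms vanishing on V₂ has dimension 3 (that is, h⁰(𝒪_{ℙ²×ℙ²}-ideal sheaf of V₂ twisted by (1,1)) = 3). -/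
/-!
The relations say that the cyclic convolution `v ⋆ w` (indices in `ℤ/3`) vanishes. For a cube
root of unity `ω` and `w = (1, ω, ω²)`, the point `(v, w)` lies in `V₂` as soon as
`∑ₘ vₘ ω⁻ᵐ = 0`, so a form `C` vanishing on `V₂` satisfies `u(m+1) = ω² u(m)` for
`u(m) = ∑ₙ ωⁿ C m n`. This says that the discrete Fourier transform of
`n ↦ C m (n+1) - C (m+1) n` vanishes at all three cube roots of unity, hence (Vandermonde)
`C (m+1) n = C m (n+1)`: `C m n` depends only on `m + n mod 3`, which describes exactly the
span of `f₀, g₀, h₀`.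
-/

open scoped BigOperators

/-- Evaluation of a bidegree-`(1,1)` form with coefficient array `C` at `(v, w)`. -/
def eval2 {k : Type*} [CommSemiring k] (C : Fin 3 → Fin 3 → k) (v w : Fin 3 → k) : k :=
  ∑ m : Fin 3, ∑ n : Fin 3, C m n * v m * w n

/-- Coefficient array of `f₀ = y₁z₀ + z₁y₀ + x₁x₀`. -/
def Fc (k : Type*) [CommSemiring k] : Fin 3 → Fin 3 → k :=
  ![![1, 0, 0], ![0, 0, 1], ![0, 1, 0]]

/-- Coefficient array of `g₀ = z₁x₀ + x₁z₀ + y₁y₀`. -/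
def Gc (k : Type*) [CommSemiring k] : Fin 3 → Fin 3 → k :=
  ![![0, 0, 1], ![0, 1, 0], ![1, 0, 0]]

/-- Coefficient array of `h₀ = x₁y₀ + y₁x₀ + z₁z₀`. -/
def Hc (k : Type*) [CommSemiring k] : Fin 3 → Fin 3 → k :=
  ![![0, 1, 0], ![1, 0, 0], ![0, 0, 1]]

open Finset

theorem IsPrimitiveRoot.eq_zero_of_forall_sum_pow_mul_eq_zero {R : Type*} [CommRing R]
    [IsDomain R] {n : ℕ} {ζ : R} (hζ : IsPrimitiveRoot ζ n) {a : Fin n → R}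
    (h : ∀ j : Fin n, ∑ i : Fin n, (ζ ^ (j : ℕ)) ^ (i : ℕ) * a i = 0) : a = 0 := by
  have hinj : Function.Injective fun j : Fin n => ζ ^ (j : ℕ) :=
    fun i j hij => Fin.ext (hζ.pow_inj i.isLt j.isLt hij)
  refine Matrix.eq_zero_of_mulVec_eq_zero (Matrix.det_vandermonde_ne_zero_iff.mpr hinj) ?_
  funext j
  simpa [Matrix.mulVec, dotProduct] using h j

section CommSemiring

variable {k : Type*} [CommSemiring k]

theorem eval2_zero (v w : Fin 3 → k) : eval2 0 v w = 0 := by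
  simp [eval2]

theorem eval2_add (C D : Fin 3 → Fin 3 → k) (v w : Fin 3 → k) :
    eval2 (C + D) v w = eval2 C v w + eval2 D v w := by
  simp only [eval2, Pi.add_apply, add_mul, sum_add_distrib]

theorem eval2_smul (a : k) (C : Fin 3 → Fin 3 → k) (v w : Fin 3 → k) :
    eval2 (a • C) v w = a * eval2 C v w := by
  simp only [eval2, Pi.smul_apply, smul_eq_mul, mul_sum, mul_assoc]

variable (k) in
def vanishingOnV2 : Submodule k (Fin 3 → Fin 3 → k) where
  carrier := {C | ∀ v w : Fin 3 → k, v ≠ 0 → w ≠ 0 →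
    (eval2 (Fc k) v w = 0 ∧ eval2 (Gc k) v w = 0 ∧ eval2 (Hc k) v w = 0) → eval2 C v w = 0}
  add_mem' {C D} hC hD v w hv hw hvw := by
    rw [eval2_add, hC v w hv hw hvw, hD v w hv hw hvw, add_zero]
  zero_mem' v w _ _ _ := eval2_zero v w
  smul_mem' a C hC v w hv hw hvw := by
    rw [eval2_smul, hC v w hv hw hvw, mul_zero]

variable (k) in
theorem span_le_vanishingOnV2 : Submodule.span k {Fc k, Gc k, Hc k} ≤ vanishingOnV2 k := by
  rw [Submodule.span_le]
  rintro C (rfl | rfl | rfl) v w - - ⟨hf, hg, hh⟩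
  exacts [hf, hg, hh]

theorem mem_span_of_hankel {C : Fin 3 → Fin 3 → k} (hC : ∀ m n, C (m + 1) n = C m (n + 1)) :
    C ∈ Submodule.span k {Fc k, Gc k, Hc k} := by
  have hCeq : C = C 0 0 • Fc k + C 0 2 • Gc k + C 0 1 • Hc k := by
    have h00 := hC 0 0; have h01 := hC 0 1; have h02 := hC 0 2
    have h10 := hC 1 0; have h11 := hC 1 1; have h12 := hC 1 2
    funext i j
    fin_cases i <;> fin_cases j <;> simp_all [Fc, Gc, Hc]
  rw [hCeq]
  refine add_mem (add_mem ?_ ?_) ?_ <;>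
    exact Submodule.smul_mem _ _ (Submodule.subset_span (by simp))

end CommSemiring

section CommRing

variable {k : Type*} [CommRing k] {ω : k}

variable (k) in
theorem linearIndependent_fc_gc_hc [Nontrivial k] :
    LinearIndependent k ![Fc k, Gc k, Hc k] := by
  rw [Fintype.linearIndependent_iff]
  intro g hg i
  have h0 := congrFun (congrFun hg 0) 0
  have h1 := congrFun (congrFun hg 0) 1
  have h2 := congrFun (congrFun hg 0) 2
  simp [Fin.sum_univ_three, Fc, Gc, Hc] at h0 h1 h2
  fin_cases i <;> assumption

def rowEval (C : Fin 3 → Fin 3 → k) (ω : k) (m : Fin 3) : k :=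
  ∑ n : Fin 3, ω ^ (n : ℕ) * C m n

theorem eval2_pow_eq_sum_rowEval (C : Fin 3 → Fin 3 → k) (v : Fin 3 → k) :
    eval2 C v (ω ^ ·.val) = ∑ m, v m * rowEval C ω m := by
  simp only [eval2, rowEval, mul_sum]
  exact sum_congr rfl fun _ _ => sum_congr rfl fun _ _ => by ring

theorem sum_pow_mul_shift_eq (hω : ω ^ 3 = 1) (C : Fin 3 → Fin 3 → k) (m : Fin 3) :
    ∑ n : Fin 3, ω ^ (n : ℕ) * C m (n + 1) = ω ^ 2 * rowEval C ω m := by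
  simp only [rowEval, Fin.sum_univ_three, Fin.isValue, Fin.reduceAdd, Fin.val_zero, Fin.val_one,
    Fin.val_two]
  linear_combination -(C m 1 + ω * C m 2) * hω

theorem fc_gc_hc_vanish_at_cubeRoot (hω : ω ^ 3 = 1) {v : Fin 3 → k}
    (hv : v = ![1, -ω, 0] ∨ v = ![1, 0, -ω ^ 2]) :
    eval2 (Fc k) v (ω ^ ·.val) = 0 ∧ eval2 (Gc k) v (ω ^ ·.val) = 0 ∧
      eval2 (Hc k) v (ω ^ ·.val) = 0 := by
  rcases hv with rfl | rfl <;>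
    simp only [eval2, Fc, Gc, Hc, Fin.sum_univ_three, Matrix.cons_val_zero, Matrix.cons_val_one,
      Matrix.cons_val_two, Matrix.head_cons, Matrix.tail_cons, Fin.val_zero, Fin.val_one, Fin.val_two]
  · exact ⟨by linear_combination -hω, by ring, by ring⟩
  · exact ⟨by linear_combination -hω, by ring, by linear_combination -ω * hω⟩

theorem rowEval_succ [Nontrivial k] {C : Fin 3 → Fin 3 → k} (hC : C ∈ vanishingOnV2 k)
    (hω : ω ^ 3 = 1) (m : Fin 3) : rowEval C ω (m + 1) = ω ^ 2 * rowEval C ω m := by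
  have hw : (ω ^ ·.val : Fin 3 → k) ≠ 0 := fun h => by simpa using congrFun h 0
  have e1 := hC _ _ (fun h => by simpa using congrFun h 0) hw
    (fc_gc_hc_vanish_at_cubeRoot hω (.inl rfl))
  have e2 := hC _ _ (fun h => by simpa using congrFun h 0) hw
    (fc_gc_hc_vanish_at_cubeRoot hω (.inr rfl))
  simp only [eval2_pow_eq_sum_rowEval, Fin.sum_univ_three, Matrix.cons_val_zero,
    Matrix.cons_val_one, Matrix.cons_val_two, Matrix.head_cons, Matrix.tail_cons] at e1 e2
  fin_cases m <;>
    simp only [Fin.zero_eta, Fin.mk_one, Fin.reduceFinMk, Fin.isValue, Fin.reduceAdd]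
  · linear_combination -ω ^ 2 * e1 - rowEval C ω 1 * hω
  · linear_combination ω * e1 - ω * e2 - rowEval C ω 2 * hω
  · linear_combination e2

theorem hankel_of_mem_vanishingOnV2 [IsDomain k] {ζ : k} (hζ : IsPrimitiveRoot ζ 3)
    {C : Fin 3 → Fin 3 → k} (hC : C ∈ vanishingOnV2 k) (m n : Fin 3) :
    C (m + 1) n = C m (n + 1) := by
  suffices (fun n => C m (n + 1) - C (m + 1) n) = 0 from (sub_eq_zero.mp (congrFun this n)).symm
  refine hζ.eq_zero_of_forall_sum_pow_mul_eq_zero fun j => ?_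
  have hω : (ζ ^ (j : ℕ)) ^ 3 = 1 := by rw [← pow_mul, mul_comm, pow_mul, hζ.pow_eq_one, one_pow]
  simp only [mul_sub, sum_sub_distrib, sum_pow_mul_shift_eq hω]
  rw [← rowEval, rowEval_succ hC hω, sub_self]

end CommRing

theorem bidegree_one_one_forms_vanishing_on_V2
    (k : Type*) [Field k] [IsAlgClosed k] [CharZero k] :
    (∀ C : Fin 3 → Fin 3 → k,
      (∀ v w : Fin 3 → k, v ≠ 0 → w ≠ 0 →
          (eval2 (Fc k) v w = 0 ∧ eval2 (Gc k) v w = 0 ∧ eval2 (Hc k) v w = 0) →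
          eval2 C v w = 0)
        ↔ C ∈ Submodule.span k {Fc k, Gc k, Hc k}) ∧
    LinearIndependent k ![Fc k, Gc k, Hc k] := by
  obtain ⟨ζ, hζ⟩ := HasEnoughRootsOfUnity.exists_primitiveRoot k 3
  have hV : vanishingOnV2 k = Submodule.span k {Fc k, Gc k, Hc k} :=
    le_antisymm (fun C hC => mem_span_of_hankel (hankel_of_mem_vanishingOnV2 hζ hC))
      (span_le_vanishingOnV2 k)
  exact ⟨fun C => SetLike.ext_iff.mp hV C, linearIndependent_fc_gc_hc k⟩
end

section
/- In the formal power series ring ℤ⟦t⟧, set H = 1 + Σ_{d≥1} (3·(2^⌈(d−1)/2⌉ + 2^⌊(d+1)/2⌋) − 6)·t^d (the Hilbert series of the point parameter ring B of a degenerate Sklyanin algebra, whose coefficients are dim_k B_d). Then H·(1 − 2t²)·(1 − t) = (1 + t²)·(1 + 2t); that is, H_B(t) = (1+t²)(1+2t) / ((1−2t²)(1−t)). -/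
/-!
Away from degree `0` the coefficients are `3·(2^⌊d/2⌋ + 2^⌈d/2⌉) − 6`, and this formula gives `0`
in degree `0`, so `H = 3F + 3G − 6/(1 − t) + 1` with `F = Σ 2^⌊n/2⌋ tⁿ` and `G = Σ 2^⌈n/2⌉ tⁿ`.
The coefficients of `F` and `G` double every two steps, so `F·(1 − 2t²) = 1 + t` and
`G·(1 − 2t²) = 1 + 2t`; multiplying out gives the claimed identity.
-/

open PowerSeries

/-- The Hilbert series of the point parameter ring `B`: constant coefficient `1` and
`d`-th coefficient `3·(2^⌈(d−1)/2⌉ + 2^⌊(d+1)/2⌋) − 6` for `d ≥ 1`. -/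
noncomputable def hilbertB : PowerSeries ℤ :=
  PowerSeries.mk fun d =>
    if d = 0 then 1 else 3 * ((2 : ℤ) ^ (d / 2) + 2 ^ ((d + 1) / 2)) - 6

theorem PowerSeries.mk_mul_one_sub_C_mul_X_sq {R : Type*} [CommRing R] {a : ℕ → R} {c : R}
    (ha : ∀ n, a (n + 2) = c * a n) :
    mk a * (1 - C c * X ^ 2) = C (a 0) + C (a 1) * X := by
  rw [mul_sub, mul_one, mul_left_comm, ← mul_assoc]
  ext (_ | _ | n) <;> simp [coeff_mul_X_pow', ha]

theorem mk_two_pow_half_mul : mk (fun n => (2 : ℤ) ^ (n / 2)) * (1 - 2 * X ^ 2) = 1 + X := by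
  simpa using mk_mul_one_sub_C_mul_X_sq (a := fun n => (2 : ℤ) ^ (n / 2)) (c := 2)
    fun n => by simp [Nat.add_div_right, pow_succ']

theorem mk_two_pow_half_succ_mul :
    mk (fun n => (2 : ℤ) ^ ((n + 1) / 2)) * (1 - 2 * X ^ 2) = 1 + 2 * X := by
  simpa using mk_mul_one_sub_C_mul_X_sq (a := fun n => (2 : ℤ) ^ ((n + 1) / 2)) (c := 2)
    fun n => by simp [show (n + 2 + 1) / 2 = (n + 1) / 2 + 1 by omega, pow_succ']

theorem hilbertB_eq :
    hilbertB = 3 * mk (fun n => (2 : ℤ) ^ (n / 2)) + 3 * mk (fun n => (2 : ℤ) ^ ((n + 1) / 2))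
      - 6 * mk 1 + 1 := by
  rw [show (3 : ℤ⟦X⟧) = C 3 by simp, show (6 : ℤ⟦X⟧) = C 6 by simp]
  ext (_ | n) <;> simp only [hilbertB, map_add, map_sub, coeff_C_mul, coeff_mk, coeff_one]
  · simp
  · simp
    ring

theorem hilbert_series_of_B :
    hilbertB * ((1 - 2 * (PowerSeries.X : PowerSeries ℤ) ^ 2) * (1 - PowerSeries.X))
      = (1 + (PowerSeries.X : PowerSeries ℤ) ^ 2) * (1 + 2 * PowerSeries.X) := by
  rw [hilbertB_eq]
  linear_combination (3 * (1 - (X : ℤ⟦X⟧))) * mk_two_pow_half_mul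
    + (3 * (1 - (X : ℤ⟦X⟧))) * mk_two_pow_half_succ_mul
    - (6 * (1 - 2 * (X : ℤ⟦X⟧) ^ 2)) * mk_one_mul_one_sub_eq_one (S := ℤ)
end
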